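/- arXiv:1902.08084 — 9 statements merged into one kernel-verified Lean document; each statement's English description precedes it below -/
import Mathlib

section
/- The vector field b is divergence-free in the sense of distributions on all of ℝ³: for every smooth compactly supported function φ : ℝ³ → ℝ, one has ∫_{ℝ³} b(x)·∇φ(x) dx = 0. -/
open MeasureTheory Real Set Filter Topology

noncomputable section

/-- The upper paraboloid `P⁺ = {(x,y,z) : x² + y² ≤ z}`. -/
def Pplus : Set (ℝ × ℝ × ℝ) := {p | p.1 ^ 2 + p.2.1 ^ 2 ≤ p.2.2}

/-- The lower paraboloid `P⁻ = {(x,y,z) : x² + y² ≤ -z}`. -/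
def Pminus : Set (ℝ × ℝ × ℝ) := {p | p.1 ^ 2 + p.2.1 ^ 2 ≤ -p.2.2}

/-- `P = P⁺ ∪ P⁻`. -/
def PP : Set (ℝ × ℝ × ℝ) := Pplus ∪ Pminus

open scoped Classical in
/-- The vector field `b(x,y,z) = (-sgn z · x/z², -sgn z · y/z², -2/|z|)` on `P \ {z = 0}`,
and `0` elsewhere. -/
def bb : ℝ × ℝ × ℝ → ℝ × ℝ × ℝ := fun p =>
  if p ∈ PP ∧ p.2.2 ≠ 0 then
    (-(Real.sign p.2.2) * p.1 / p.2.2 ^ 2,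
     -(Real.sign p.2.2) * p.2.1 / p.2.2 ^ 2,
     -2 / |p.2.2|)
  else (0, 0, 0)

/-- Euclidean dot product on `ℝ³ = ℝ × ℝ × ℝ`. -/
def dot3 (a c : ℝ × ℝ × ℝ) : ℝ := a.1 * c.1 + a.2.1 * c.2.1 + a.2.2 * c.2.2

/-- The spatial gradient of a function `φ : ℝ³ → ℝ`. -/
def grad3 (φ : ℝ × ℝ × ℝ → ℝ) (p : ℝ × ℝ × ℝ) : ℝ × ℝ × ℝ :=
  (fderiv ℝ φ p (1, 0, 0), fderiv ℝ φ p (0, 1, 0), fderiv ℝ φ p (0, 0, 1))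

/-! ### Auxiliary linear algebra -/

def e3 : (ℝ × ℝ × ℝ) ≃ₗ[ℝ] (Fin 3 → ℝ) where
  toFun p := ![p.1, p.2.1, p.2.2]
  invFun f := (f 0, f 1, f 2)
  map_add' p q := by funext i; fin_cases i <;> simp
  map_smul' c p := by funext i; fin_cases i <;> simp
  left_inv p := by simp
  right_inv f := by funext i; fin_cases i <;> simp

def B3 : Module.Basis (Fin 3) ℝ (ℝ × ℝ × ℝ) := Module.Basis.ofEquivFun e3

/-- The linear map (da,db,dt) ↦ (t·da + a·dt, t·db + b·dt, c·dt). -/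
def Lmap (a b t c : ℝ) : (ℝ × ℝ × ℝ) →ₗ[ℝ] (ℝ × ℝ × ℝ) where
  toFun v := (t * v.1 + a * v.2.2, t * v.2.1 + b * v.2.2, c * v.2.2)
  map_add' v w := by simp [Prod.ext_iff]; refine ⟨by ring, by ring, by ring⟩
  map_smul' r v := by simp [Prod.ext_iff]; constructor; ring; constructor <;> ring

def Lcmap (a b t c : ℝ) : (ℝ × ℝ × ℝ) →L[ℝ] (ℝ × ℝ × ℝ) :=
  LinearMap.toContinuousLinearMap (Lmap a b t c)

lemma det_Lmap (a b t c : ℝ) : (Lcmap a b t c).det = t * t * c := by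
  have h : LinearMap.toMatrix B3 B3 (Lmap a b t c) = !![t,0,a;0,t,b;0,0,c] := by
    ext i j
    fin_cases i <;> fin_cases j <;>
      simp [LinearMap.toMatrix_apply, B3, Lmap, e3, Module.Basis.ofEquivFun,
        Matrix.vecHead, Matrix.vecTail]
  have h2 : (Lcmap a b t c).det = LinearMap.det (Lmap a b t c) := rfl
  rw [h2, ← LinearMap.det_toMatrix B3, h, Matrix.det_fin_three]
  simp [Matrix.vecHead, Matrix.vecTail]

/-- The map `(a,b,t) ↦ (a t, b t, σ t²)`. -/
def Phi (σ : ℝ) : ℝ × ℝ × ℝ → ℝ × ℝ × ℝ := fun p =>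
  (p.1 * p.2.2, p.2.1 * p.2.2, σ * p.2.2 ^ 2)

lemma hasFDerivAt_Phi (σ : ℝ) (p : ℝ × ℝ × ℝ) :
    HasFDerivAt (Phi σ) (Lcmap p.1 p.2.1 p.2.2 (σ * (2 * p.2.2))) p := by
  have hT : HasFDerivAt (fun q : ℝ × ℝ × ℝ => q.2.2)
      ((ContinuousLinearMap.snd ℝ ℝ ℝ).comp (ContinuousLinearMap.snd ℝ ℝ (ℝ × ℝ))) p :=
    hasFDerivAt_snd.comp p hasFDerivAt_snd
  have hA : HasFDerivAt (fun q : ℝ × ℝ × ℝ => q.1)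
      (ContinuousLinearMap.fst ℝ ℝ (ℝ × ℝ)) p := hasFDerivAt_fst
  have hB : HasFDerivAt (fun q : ℝ × ℝ × ℝ => q.2.1)
      ((ContinuousLinearMap.fst ℝ ℝ ℝ).comp (ContinuousLinearMap.snd ℝ ℝ (ℝ × ℝ))) p :=
    hasFDerivAt_fst.comp p hasFDerivAt_snd
  have h1 := hA.mul hT
  have h2 := hB.mul hT
  have h3 := (hT.mul hT).const_mul σ
  have H := h1.prodMk (h2.prodMk h3)
  have hfun : Phi σ = fun x : ℝ × ℝ × ℝ =>
      (x.1 * x.2.2, x.2.1 * x.2.2, σ * (x.2.2 * x.2.2)) := by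
    funext x; simp [Phi, sq]
  have heq : (Lcmap p.1 p.2.1 p.2.2 (σ * (2 * p.2.2))) =
      ((p.1 • (ContinuousLinearMap.snd ℝ ℝ ℝ).comp (ContinuousLinearMap.snd ℝ ℝ (ℝ × ℝ)) +
          p.2.2 • ContinuousLinearMap.fst ℝ ℝ (ℝ × ℝ)).prod
      ((p.2.1 • (ContinuousLinearMap.snd ℝ ℝ ℝ).comp (ContinuousLinearMap.snd ℝ ℝ (ℝ × ℝ)) +
            p.2.2 • (ContinuousLinearMap.fst ℝ ℝ ℝ).comp (ContinuousLinearMap.snd ℝ ℝ (ℝ × ℝ))).prod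
        (σ •
          (p.2.2 • (ContinuousLinearMap.snd ℝ ℝ ℝ).comp (ContinuousLinearMap.snd ℝ ℝ (ℝ × ℝ)) +
            p.2.2 • (ContinuousLinearMap.snd ℝ ℝ ℝ).comp (ContinuousLinearMap.snd ℝ ℝ (ℝ × ℝ)))))) := by
    ext v <;> simp [Lcmap, Lmap, Prod.ext_iff] <;> ring
  rw [hfun, heq]
  exact H

lemma clm_apply3 (D : (ℝ × ℝ × ℝ) →L[ℝ] ℝ) (a b c : ℝ) :
    D (a, b, c) = a * D (1, 0, 0) + b * D (0, 1, 0) + c * D (0, 0, 1) := by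
  have h : (a, b, c) = a • ((1:ℝ), (0:ℝ), (0:ℝ)) + b • ((0:ℝ), (1:ℝ), (0:ℝ))
      + c • ((0:ℝ), (0:ℝ), (1:ℝ)) := by
    simp [Prod.ext_iff]
  rw [h, map_add, map_add, D.map_smul, D.map_smul, D.map_smul]
  simp [smul_eq_mul]

/-- The transformed integrand. -/
def GG (σ : ℝ) (φ : ℝ × ℝ × ℝ → ℝ) : ℝ × ℝ × ℝ → ℝ := fun p =>
  if 0 < p.2.2 ∧ p.1 ^ 2 + p.2.1 ^ 2 ≤ 1 then
    (-2 * σ) * (fderiv ℝ φ (Phi σ p)) (p.1, p.2.1, σ * (2 * p.2.2))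
  else 0

instance : (volume : Measure (ℝ × ℝ × ℝ)).IsAddLeftInvariant := by
  rw [show (volume : Measure (ℝ × ℝ × ℝ)) = (volume : Measure ℝ).prod (volume : Measure (ℝ × ℝ))
    from Measure.volume_eq_prod ..]
  infer_instance

instance : (volume : Measure (ℝ × ℝ × ℝ)).IsAddHaarMeasure :=
  { toIsFiniteMeasureOnCompacts := inferInstance, toIsAddLeftInvariant := inferInstance,
    toIsOpenPosMeasure := inferInstance }

section MainAux

variable {φ : ℝ × ℝ × ℝ → ℝ} {σ : ℝ}

/-- the half space `t > 0` -/
def sS : Set (ℝ × ℝ × ℝ) := {p | 0 < p.2.2}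

lemma measurableSet_sS : MeasurableSet sS :=
  measurableSet_lt measurable_const (measurable_snd.comp measurable_snd)

lemma injOn_Phi (hσ : σ = 1 ∨ σ = -1) : InjOn (Phi σ) sS := by
  rintro p hp q hq h
  have hσ0 : σ ≠ 0 := by rcases hσ with h | h <;> rw [h] <;> norm_num
  have hp3 : 0 < p.2.2 := hp
  have hq3 : 0 < q.2.2 := hq
  have e3' : σ * p.2.2 ^ 2 = σ * q.2.2 ^ 2 := congrArg (fun r => r.2.2) h
  have ht : p.2.2 = q.2.2 := by
    have h2 : p.2.2 ^ 2 = q.2.2 ^ 2 := mul_left_cancel₀ hσ0 e3'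
    nlinarith
  have e1 : p.1 * p.2.2 = q.1 * q.2.2 := congrArg (fun r => r.1) h
  have e2 : p.2.1 * p.2.2 = q.2.1 * q.2.2 := congrArg (fun r => r.2.1) h
  rw [ht] at e1 e2
  have h1 : p.1 = q.1 := mul_right_cancel₀ hq3.ne' e1
  have h2 : p.2.1 = q.2.1 := mul_right_cancel₀ hq3.ne' e2
  exact Prod.ext h1 (Prod.ext h2 ht)

lemma image_Phi (hσ : σ = 1 ∨ σ = -1) : Phi σ '' sS = {p : ℝ × ℝ × ℝ | 0 < σ * p.2.2} := by
  have hσ2 : σ * σ = 1 := by rcases hσ with h | h <;> rw [h] <;> norm_num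
  ext q
  constructor
  · rintro ⟨p, hp, rfl⟩
    have hp3 : 0 < p.2.2 := hp
    show 0 < σ * (σ * p.2.2 ^ 2)
    rw [← mul_assoc, hσ2, one_mul]
    positivity
  · intro hq
    have hq' : 0 < σ * q.2.2 := hq
    set t := Real.sqrt (σ * q.2.2) with ht
    have ht0 : 0 < t := Real.sqrt_pos.2 hq'
    refine ⟨(q.1 / t, q.2.1 / t, t), ht0, ?_⟩
    have ht2 : t ^ 2 = σ * q.2.2 := Real.sq_sqrt hq'.le
    show (q.1 / t * t, q.2.1 / t * t, σ * t ^ 2) = q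
    rw [div_mul_cancel₀ _ ht0.ne', div_mul_cancel₀ _ ht0.ne', ht2, ← mul_assoc, hσ2, one_mul]

/-- Key algebraic identity on `sS`. -/
lemma key_identity (hφ : ContDiff ℝ (⊤ : ℕ∞) φ) (hσ : σ = 1 ∨ σ = -1) (p : ℝ × ℝ × ℝ) (hp : p ∈ sS) :
    |(Lcmap p.1 p.2.1 p.2.2 (σ * (2 * p.2.2))).det| •
      dot3 (bb (Phi σ p)) (grad3 φ (Phi σ p)) = GG σ φ p := by
  obtain ⟨a, b, t⟩ := p
  have ht : (0:ℝ) < t := hp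
  have ht0 : t ≠ 0 := ht.ne'
  have ht2 : (0:ℝ) < t ^ 2 := by positivity
  rw [det_Lmap]
  rcases hσ with rfl | rfl <;> by_cases hd : a ^ 2 + b ^ 2 ≤ 1
  · -- σ = 1, inside the disk
    have hmem : Phi 1 (a, b, t) ∈ PP ∧ (Phi 1 (a, b, t)).2.2 ≠ 0 := by
      constructor
      · left
        show (a * t) ^ 2 + (b * t) ^ 2 ≤ 1 * t ^ 2
        nlinarith [sq_nonneg t]
      · show (1:ℝ) * t ^ 2 ≠ 0
        positivity
    have hsgn : Real.sign ((Phi 1 (a, b, t)).2.2) = 1 := by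
      apply Real.sign_of_pos
      show (0:ℝ) < 1 * t ^ 2
      positivity
    have habs : |(Phi 1 (a, b, t)).2.2| = t ^ 2 := by
      show |(1:ℝ) * t ^ 2| = t ^ 2
      rw [abs_of_pos (by positivity)]
      ring
    rw [bb, if_pos hmem, GG, if_pos ⟨ht, hd⟩, clm_apply3, hsgn, habs]
    simp only [dot3, grad3, Phi]
    rw [abs_of_pos (by positivity : (0:ℝ) < t * t * (1 * (2 * t)))]
    simp only [smul_eq_mul]
    field_simp
    ring
  · -- σ = 1, outside the disk
    have hmem : ¬ (Phi 1 (a, b, t) ∈ PP ∧ (Phi 1 (a, b, t)).2.2 ≠ 0) := by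
      rintro ⟨hPP, -⟩
      rcases hPP with h | h
      · have h' : (a * t) ^ 2 + (b * t) ^ 2 ≤ 1 * t ^ 2 := h
        push_neg at hd
        nlinarith [mul_pos (sub_pos.2 hd) ht2]
      · have h' : (a * t) ^ 2 + (b * t) ^ 2 ≤ -(1 * t ^ 2) := h
        nlinarith [sq_nonneg (a*t), sq_nonneg (b*t), ht2]
    have hGG : GG 1 φ (a, b, t) = 0 := by
      rw [GG, if_neg]; rintro ⟨-, h⟩; exact hd h
    rw [bb, if_neg hmem, hGG]
    simp [dot3]
  · -- σ = -1, inside the disk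
    have hmem : Phi (-1) (a, b, t) ∈ PP ∧ (Phi (-1) (a, b, t)).2.2 ≠ 0 := by
      constructor
      · right
        show (a * t) ^ 2 + (b * t) ^ 2 ≤ -(-1 * t ^ 2)
        nlinarith [sq_nonneg t]
      · show (-1:ℝ) * t ^ 2 ≠ 0
        nlinarith
    have hsgn : Real.sign ((Phi (-1) (a, b, t)).2.2) = -1 := by
      apply Real.sign_of_neg
      show (-1:ℝ) * t ^ 2 < 0
      nlinarith
    have habs : |(Phi (-1) (a, b, t)).2.2| = t ^ 2 := by
      show |(-1:ℝ) * t ^ 2| = t ^ 2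
      rw [abs_of_neg (by nlinarith : (-1:ℝ) * t ^ 2 < 0)]
      ring
    rw [bb, if_pos hmem, GG, if_pos ⟨ht, hd⟩, clm_apply3, hsgn, habs]
    simp only [dot3, grad3, Phi]
    rw [abs_of_neg (by nlinarith : t * t * (-1 * (2 * t)) < 0)]
    simp only [smul_eq_mul]
    field_simp
  · -- σ = -1, outside the disk
    have hmem : ¬ (Phi (-1) (a, b, t) ∈ PP ∧ (Phi (-1) (a, b, t)).2.2 ≠ 0) := by
      rintro ⟨hPP, -⟩
      rcases hPP with h | h
      · have h' : (a * t) ^ 2 + (b * t) ^ 2 ≤ -1 * t ^ 2 := h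
        nlinarith [sq_nonneg (a*t), sq_nonneg (b*t), ht2]
      · have h' : (a * t) ^ 2 + (b * t) ^ 2 ≤ -(-1 * t ^ 2) := h
        push_neg at hd
        nlinarith [mul_pos (sub_pos.2 hd) ht2]
    have hGG : GG (-1) φ (a, b, t) = 0 := by
      rw [GG, if_neg]; rintro ⟨-, h⟩; exact hd h
    rw [bb, if_neg hmem, hGG]
    simp [dot3]

/-- The region in parameter space. -/
def SS : Set (ℝ × ℝ × ℝ) := {p | 0 < p.2.2 ∧ p.1 ^ 2 + p.2.1 ^ 2 ≤ 1}

lemma measurableSet_SS : MeasurableSet SS := by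
  have h : SS = {p : ℝ × ℝ × ℝ | 0 < p.2.2} ∩ {p : ℝ × ℝ × ℝ | p.1 ^ 2 + p.2.1 ^ 2 ≤ 1} := by
    ext p; exact Iff.rfl
  rw [h]
  exact (measurableSet_lt measurable_const (by fun_prop)).inter
    (measurableSet_le (by fun_prop) measurable_const)

lemma GG_eq_indicator :
    GG σ φ = SS.indicator
      (fun p => (-2 * σ) * (fderiv ℝ φ (Phi σ p)) (p.1, p.2.1, σ * (2 * p.2.2))) := by
  funext p
  by_cases hp : p ∈ SS
  · rw [indicator_of_mem hp]; exact if_pos hp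
  · rw [indicator_of_notMem hp]; exact if_neg hp

lemma cont_gc (hφ : ContDiff ℝ (⊤ : ℕ∞) φ) :
    Continuous fun p : ℝ × ℝ × ℝ =>
      (-2 * σ) * (fderiv ℝ φ (Phi σ p)) (p.1, p.2.1, σ * (2 * p.2.2)) := by
  apply continuous_const.mul
  apply Continuous.clm_apply
  · exact (hφ.continuous_fderiv (by simp)).comp (by unfold Phi; fun_prop)
  · fun_prop

lemma GG_norm_bound (hφ : ContDiff ℝ (⊤ : ℕ∞) φ) (hsupp : HasCompactSupport φ)
    (hσ : σ = 1 ∨ σ = -1) :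
    ∃ C ≥ (0:ℝ), ∃ T ≥ (0:ℝ), ∀ p : ℝ × ℝ × ℝ, GG σ φ p ≠ 0 →
      (p.1 ∈ Icc (-1:ℝ) 1 ∧ p.2.1 ∈ Icc (-1:ℝ) 1 ∧ p.2.2 ∈ Icc (0:ℝ) T) ∧
        |GG σ φ p| ≤ C := by
  have hσ1 : |σ| = 1 := by rcases hσ with rfl | rfl <;> simp
  obtain ⟨M, hM⟩ := (hsupp.fderiv (𝕜 := ℝ)).exists_bound_of_continuous
    (hφ.continuous_fderiv (by simp))
  have hM0 : 0 ≤ M := le_trans (norm_nonneg _) (hM 0)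
  obtain ⟨R, hR⟩ : ∃ R, tsupport φ ⊆ Metric.closedBall 0 R :=
    hsupp.isBounded.subset_closedBall 0
  set T : ℝ := Real.sqrt (max R 0) with hT
  have hT0 : 0 ≤ T := Real.sqrt_nonneg _
  refine ⟨2 * M * (1 + 2 * T), by positivity, T, hT0, ?_⟩
  intro p hGG
  have hcond : 0 < p.2.2 ∧ p.1 ^ 2 + p.2.1 ^ 2 ≤ 1 := by
    by_contra hc
    exact hGG (by rw [GG, if_neg hc])
  have hDne : fderiv ℝ φ (Phi σ p) ≠ 0 := by
    intro h0
    exact hGG (by rw [GG, if_pos hcond, h0]; simp)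
  have hsupmem : Phi σ p ∈ tsupport φ :=
    tsupport_fderiv_subset ℝ (subset_tsupport _ hDne)
  have h1 : ‖Phi σ p‖ ≤ R := by
    simpa [Metric.mem_closedBall, dist_eq_norm] using hR hsupmem
  have h2 : |σ * p.2.2 ^ 2| ≤ ‖Phi σ p‖ := by
    rw [Phi, Prod.norm_def, Prod.norm_def]
    exact le_max_of_le_right (le_max_right _ _)
  have h3 : |σ * p.2.2 ^ 2| = p.2.2 ^ 2 := by
    rw [abs_mul, hσ1, one_mul, abs_of_nonneg (sq_nonneg _)]
  have h4 : p.2.2 ^ 2 ≤ max R 0 := le_max_of_le_left (by linarith [h3 ▸ h2.trans h1])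
  have htT : p.2.2 ≤ T := by
    rw [hT, ← Real.sqrt_sq hcond.1.le]
    exact Real.sqrt_le_sqrt h4
  have ha : p.1 ∈ Icc (-1:ℝ) 1 := by
    constructor <;> nlinarith [hcond.2, sq_nonneg p.1, sq_nonneg p.2.1]
  have hb : p.2.1 ∈ Icc (-1:ℝ) 1 := by
    constructor <;> nlinarith [hcond.2, sq_nonneg p.1, sq_nonneg p.2.1]
  refine ⟨⟨ha, hb, hcond.1.le, htT⟩, ?_⟩
  rw [GG, if_pos hcond, abs_mul]
  have habs2 : |(-2 * σ)| = 2 := by rw [abs_mul, hσ1]; simp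
  rw [habs2]
  have hv : ‖(p.1, p.2.1, σ * (2 * p.2.2))‖ ≤ 1 + 2 * T := by
    rw [Prod.norm_def, Prod.norm_def]
    have e1 : ‖p.1‖ ≤ 1 + 2 * T := by
      rw [Real.norm_eq_abs, abs_le]
      constructor <;> [linarith [ha.1]; linarith [ha.2]]
    have e2 : ‖p.2.1‖ ≤ 1 + 2 * T := by
      rw [Real.norm_eq_abs, abs_le]
      constructor <;> [linarith [hb.1]; linarith [hb.2]]
    have e3 : ‖σ * (2 * p.2.2)‖ ≤ 1 + 2 * T := by
      rw [Real.norm_eq_abs, abs_mul, hσ1, one_mul,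
        abs_of_nonneg (by linarith [hcond.1.le] : (0:ℝ) ≤ 2 * p.2.2)]
      linarith
    exact max_le e1 (max_le e2 e3)
  have hop : |(fderiv ℝ φ (Phi σ p)) (p.1, p.2.1, σ * (2 * p.2.2))| ≤ M * (1 + 2 * T) := by
    rw [← Real.norm_eq_abs]
    calc ‖(fderiv ℝ φ (Phi σ p)) (p.1, p.2.1, σ * (2 * p.2.2))‖
        ≤ ‖fderiv ℝ φ (Phi σ p)‖ * ‖(p.1, p.2.1, σ * (2 * p.2.2))‖ :=
          ContinuousLinearMap.le_opNorm _ _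
      _ ≤ M * (1 + 2 * T) := by
          apply mul_le_mul (hM _) hv (norm_nonneg _) hM0
  calc (2:ℝ) * |(fderiv ℝ φ (Phi σ p)) (p.1, p.2.1, σ * (2 * p.2.2))|
      ≤ 2 * (M * (1 + 2 * T)) := by linarith
    _ = 2 * M * (1 + 2 * T) := by ring

lemma integrable_GG (hφ : ContDiff ℝ (⊤ : ℕ∞) φ) (hsupp : HasCompactSupport φ) (hσ : σ = 1 ∨ σ = -1) : Integrable (GG σ φ) := by
  obtain ⟨C, hC0, T, hT0, hbd⟩ := GG_norm_bound hφ hsupp hσ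
  set box : Set (ℝ × ℝ × ℝ) := Icc (-1:ℝ) 1 ×ˢ Icc (-1:ℝ) 1 ×ˢ Icc (0:ℝ) T with hbox
  have hbox_meas : MeasurableSet box :=
    measurableSet_Icc.prod (measurableSet_Icc.prod measurableSet_Icc)
  have hbox_cpt : IsCompact box :=
    isCompact_Icc.prod (isCompact_Icc.prod isCompact_Icc)
  have hbound_int : Integrable (box.indicator fun _ => C) := by
    rw [integrable_indicator_iff hbox_meas]
    exact integrableOn_const hbox_cpt.measure_lt_top.ne
  apply Integrable.mono' hbound_int
  · rw [GG_eq_indicator]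
    exact (((cont_gc hφ).stronglyMeasurable).indicator measurableSet_SS).aestronglyMeasurable
  · apply ae_of_all
    intro p
    by_cases h : GG σ φ p = 0
    · rw [h]
      simpa using indicator_nonneg (fun _ _ => hC0) p
    · obtain ⟨hmem, hle⟩ := hbd p h
      have hpbox : p ∈ box := ⟨hmem.1, hmem.2.1, hmem.2.2⟩
      rw [Real.norm_eq_abs, indicator_of_mem hpbox]
      exact hle

lemma slice_integrable_GG (hφ : ContDiff ℝ (⊤ : ℕ∞) φ) (hsupp : HasCompactSupport φ) (hσ : σ = 1 ∨ σ = -1) (a : ℝ) :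
    Integrable (fun q : ℝ × ℝ => GG σ φ (a, q)) := by
  obtain ⟨C, hC0, T, hT0, hbd⟩ := GG_norm_bound hφ hsupp hσ
  set box : Set (ℝ × ℝ) := Icc (-1:ℝ) 1 ×ˢ Icc (0:ℝ) T with hbox
  have hbox_meas : MeasurableSet box := measurableSet_Icc.prod measurableSet_Icc
  have hbox_cpt : IsCompact box := isCompact_Icc.prod isCompact_Icc
  have hbound_int : Integrable (box.indicator fun _ => C) := by
    rw [integrable_indicator_iff hbox_meas]
    exact integrableOn_const hbox_cpt.measure_lt_top.ne
  apply Integrable.mono' hbound_int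
  · have : (fun q : ℝ × ℝ => GG σ φ (a, q)) =
        ((fun q : ℝ × ℝ => ((a, q) : ℝ × ℝ × ℝ)) ⁻¹' SS).indicator
          (fun q : ℝ × ℝ =>
            (-2 * σ) * (fderiv ℝ φ (Phi σ (a, q))) ((a, q).1, (a, q).2.1,
              σ * (2 * (a, q).2.2))) := by
      funext q
      by_cases hq : (a, q) ∈ SS
      · rw [indicator_of_mem
          (show q ∈ (fun q : ℝ × ℝ => ((a, q) : ℝ × ℝ × ℝ)) ⁻¹' SS from hq)]
        exact if_pos hq
      · rw [indicator_of_notMem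
          (show q ∉ (fun q : ℝ × ℝ => ((a, q) : ℝ × ℝ × ℝ)) ⁻¹' SS from hq)]
        exact if_neg hq
    rw [this]
    apply StronglyMeasurable.aestronglyMeasurable
    apply StronglyMeasurable.indicator
    · exact ((cont_gc (σ := σ) hφ).comp (by fun_prop)).stronglyMeasurable
    · exact measurableSet_SS.preimage (by fun_prop)
  · apply ae_of_all
    intro q
    by_cases h : GG σ φ (a, q) = 0
    · rw [h]
      simpa using indicator_nonneg (fun _ _ => hC0) q
    · obtain ⟨hmem, hle⟩ := hbd (a, q) h
      have hqbox : q ∈ box := ⟨hmem.2.1, hmem.2.2⟩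
      rw [Real.norm_eq_abs, indicator_of_mem hqbox]
      exact hle

lemma ftc_inner (hφ : ContDiff ℝ (⊤ : ℕ∞) φ) (hsupp : HasCompactSupport φ) (hσ : σ = 1 ∨ σ = -1) (a b : ℝ) :
    ∫ t in Ioi (0:ℝ), (fderiv ℝ φ (a * t, b * t, σ * t ^ 2)) (a, b, σ * (2 * t))
      = -φ (0, 0, 0) := by
  have hσ1 : |σ| = 1 := by rcases hσ with rfl | rfl <;> simp
  obtain ⟨R, hR⟩ : ∃ R, tsupport φ ⊆ Metric.closedBall 0 R :=
    hsupp.isBounded.subset_closedBall 0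
  set T : ℝ := Real.sqrt (max R 0) + 1 with hT
  have hT0 : 0 < T := by positivity
  have hout : ∀ t : ℝ, T ≤ |t| → (a * t, b * t, σ * t ^ 2) ∉ tsupport φ := by
    intro t htT hmem
    have h1 : ‖(a * t, b * t, σ * t ^ 2)‖ ≤ R := by
      have := hR hmem
      simpa [Metric.mem_closedBall, dist_eq_norm] using this
    have h2 : |σ * t ^ 2| ≤ ‖(a * t, b * t, σ * t ^ 2)‖ := by
      rw [Prod.norm_def, Prod.norm_def]
      exact le_max_of_le_right (le_max_right _ _)
    have h3 : |σ * t ^ 2| = t ^ 2 := by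
      rw [abs_mul, hσ1, one_mul, abs_of_nonneg (sq_nonneg t)]
    have h4 : t ^ 2 ≤ max R 0 := le_max_of_le_left (h3 ▸ h2.trans h1)
    have h5 : |t| ≤ Real.sqrt (max R 0) := by
      rw [← Real.sqrt_sq_eq_abs]
      exact Real.sqrt_le_sqrt h4
    nlinarith [Real.sqrt_nonneg (max R 0)]
  set γ : ℝ → ℝ × ℝ × ℝ := fun t => (a * t, b * t, σ * t ^ 2) with hγ
  have hγd : ∀ t : ℝ, HasDerivAt γ (a, b, σ * (2 * t)) t := by
    intro t
    have h1 : HasDerivAt (fun s : ℝ => a * s) a t := by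
      simpa using (hasDerivAt_id t).const_mul a
    have h2 : HasDerivAt (fun s : ℝ => b * s) b t := by
      simpa using (hasDerivAt_id t).const_mul b
    have h3 : HasDerivAt (fun s : ℝ => σ * s ^ 2) (σ * (2 * t)) t := by
      simpa [mul_comm] using (hasDerivAt_pow 2 t).const_mul σ
    exact h1.prodMk (h2.prodMk h3)
  have hderiv : ∀ t : ℝ, HasDerivAt (fun s => φ (γ s))
      ((fderiv ℝ φ (γ t)) (a, b, σ * (2 * t))) t := fun t =>
    ((hφ.differentiable (by simp) (γ t)).hasFDerivAt).comp_hasDerivAt t (hγd t)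
  have hcont : Continuous fun t : ℝ => (fderiv ℝ φ (γ t)) (a, b, σ * (2 * t)) := by
    apply Continuous.clm_apply
    · exact (hφ.continuous_fderiv (by simp)).comp (by fun_prop)
    · fun_prop
  have hcs : HasCompactSupport fun t : ℝ => (fderiv ℝ φ (γ t)) (a, b, σ * (2 * t)) := by
    apply HasCompactSupport.intro (isCompact_Icc (a := -T) (b := T))
    intro t htI
    have habs : T ≤ |t| := by
      by_contra hc
      push_neg at hc
      rw [abs_lt] at hc
      exact htI ⟨hc.1.le, hc.2.le⟩
    have h0 : fderiv ℝ φ (γ t) = 0 := by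
      apply image_eq_zero_of_notMem_tsupport
      intro hmem
      exact hout t habs (tsupport_fderiv_subset ℝ hmem)
    simp [h0]
  have hint : IntegrableOn (fun t : ℝ => (fderiv ℝ φ (γ t)) (a, b, σ * (2 * t))) (Ioi 0) :=
    (hcont.integrable_of_hasCompactSupport hcs).integrableOn
  have htend : Tendsto (fun s => φ (γ s)) atTop (𝓝 0) := by
    apply Tendsto.congr' _ tendsto_const_nhds
    filter_upwards [Filter.mem_atTop T] with t htT
    exact (image_eq_zero_of_notMem_tsupport (hout t (le_trans htT (le_abs_self t)))).symm
  have := integral_Ioi_of_hasDerivAt_of_tendsto' (f := fun s => φ (γ s))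
    (fun t _ => hderiv t) hint htend
  rw [this]
  simp [hγ]

lemma integral_GG (hφ : ContDiff ℝ (⊤ : ℕ∞) φ) (hsupp : HasCompactSupport φ) (hσ : σ = 1 ∨ σ = -1) : ∫ p, GG σ φ p = (2 * σ * φ (0, 0, 0)) *
    ∫ a : ℝ, ∫ b : ℝ, (if a ^ 2 + b ^ 2 ≤ 1 then (1:ℝ) else 0) := by
  have hvol3 : (volume : Measure (ℝ × ℝ × ℝ)) =
      (volume : Measure ℝ).prod (volume : Measure (ℝ × ℝ)) := Measure.volume_eq_prod ..
  have hvol2 : (volume : Measure (ℝ × ℝ)) =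
      (volume : Measure ℝ).prod (volume : Measure ℝ) := Measure.volume_eq_prod ..
  have step3 : ∀ a b : ℝ, (∫ t : ℝ, GG σ φ (a, b, t)) =
      (2 * σ * φ (0, 0, 0)) * (if a ^ 2 + b ^ 2 ≤ 1 then (1:ℝ) else 0) := by
    intro a b
    by_cases hd : a ^ 2 + b ^ 2 ≤ 1
    · have hfun : (fun t : ℝ => GG σ φ (a, b, t)) = (Ioi (0:ℝ)).indicator
          (fun t => (-2 * σ) * (fderiv ℝ φ (a * t, b * t, σ * t ^ 2)) (a, b, σ * (2 * t))) := by
        funext t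
        by_cases ht : 0 < t
        · rw [indicator_of_mem (show t ∈ Ioi (0:ℝ) from ht)]
          exact if_pos ⟨ht, hd⟩
        · rw [indicator_of_notMem (show t ∉ Ioi (0:ℝ) from ht)]
          exact if_neg (fun hc => ht hc.1)
      rw [hfun, integral_indicator measurableSet_Ioi, if_pos hd, integral_const_mul,
        ftc_inner hφ hsupp hσ a b]
      ring
    · have hfun : (fun t : ℝ => GG σ φ (a, b, t)) = fun _ => 0 := by
        funext t
        exact if_neg (fun hc => hd hc.2)
      rw [hfun, if_neg hd, integral_zero]
      ring
  have step2 : ∀ a : ℝ, (∫ q : ℝ × ℝ, GG σ φ (a, q)) =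
      (2 * σ * φ (0, 0, 0)) * ∫ b : ℝ, (if a ^ 2 + b ^ 2 ≤ 1 then (1:ℝ) else 0) := by
    intro a
    have hI2 : Integrable (fun q : ℝ × ℝ => GG σ φ (a, q))
        ((volume : Measure ℝ).prod (volume : Measure ℝ)) :=
      hvol2 ▸ slice_integrable_GG hφ hsupp hσ a
    calc (∫ q : ℝ × ℝ, GG σ φ (a, q))
        = ∫ b : ℝ, ∫ t : ℝ, GG σ φ (a, b, t) := by
          rw [hvol2]; exact integral_prod _ hI2
      _ = ∫ b : ℝ, (2 * σ * φ (0, 0, 0)) * (if a ^ 2 + b ^ 2 ≤ 1 then (1:ℝ) else 0) :=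
          integral_congr_ae (ae_of_all _ (step3 a))
      _ = (2 * σ * φ (0, 0, 0)) * ∫ b : ℝ, (if a ^ 2 + b ^ 2 ≤ 1 then (1:ℝ) else 0) :=
          integral_const_mul _ _
  have hI : Integrable (GG σ φ) ((volume : Measure ℝ).prod (volume : Measure (ℝ × ℝ))) :=
    hvol3 ▸ integrable_GG hφ hsupp hσ
  calc (∫ p, GG σ φ p)
      = ∫ a : ℝ, ∫ q : ℝ × ℝ, GG σ φ (a, q) := by
        rw [hvol3]; exact integral_prod _ hI
    _ = ∫ a : ℝ, (2 * σ * φ (0, 0, 0)) * ∫ b : ℝ, (if a ^ 2 + b ^ 2 ≤ 1 then (1:ℝ) else 0) :=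
        integral_congr_ae (ae_of_all _ step2)
    _ = (2 * σ * φ (0, 0, 0)) * ∫ a : ℝ, ∫ b : ℝ, (if a ^ 2 + b ^ 2 ≤ 1 then (1:ℝ) else 0) :=
        integral_const_mul _ _

lemma setIntegral_half (hφ : ContDiff ℝ (⊤ : ℕ∞) φ) (hsupp : HasCompactSupport φ) (hσ : σ = 1 ∨ σ = -1) :
    ∫ p in {p : ℝ × ℝ × ℝ | 0 < σ * p.2.2}, dot3 (bb p) (grad3 φ p) = ∫ p, GG σ φ p := by
  have hf' : ∀ p ∈ sS, HasFDerivWithinAt (Phi σ)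
      (Lcmap p.1 p.2.1 p.2.2 (σ * (2 * p.2.2))) sS p :=
    fun p _ => (hasFDerivAt_Phi σ p).hasFDerivWithinAt
  rw [← image_Phi hσ,
    integral_image_eq_integral_abs_det_fderiv_smul volume measurableSet_sS hf'
      (injOn_Phi hσ) (fun p => dot3 (bb p) (grad3 φ p))]
  rw [setIntegral_congr_fun measurableSet_sS (fun p hp => key_identity hφ hσ p hp)]
  have hGz : GG σ φ = sS.indicator (GG σ φ) := by
    funext p
    by_cases hp : p ∈ sS
    · rw [indicator_of_mem hp]
    · rw [indicator_of_notMem hp]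
      have : ¬ (0 < p.2.2 ∧ p.1 ^ 2 + p.2.1 ^ 2 ≤ 1) := fun h => hp h.1
      simp [GG, this]
  conv_rhs => rw [hGz]
  rw [integral_indicator measurableSet_sS]

lemma integrableOn_half (hφ : ContDiff ℝ (⊤ : ℕ∞) φ) (hsupp : HasCompactSupport φ) (hσ : σ = 1 ∨ σ = -1) :
    IntegrableOn (fun p => dot3 (bb p) (grad3 φ p)) {p : ℝ × ℝ × ℝ | 0 < σ * p.2.2} := by
  have hf' : ∀ p ∈ sS, HasFDerivWithinAt (Phi σ)
      (Lcmap p.1 p.2.1 p.2.2 (σ * (2 * p.2.2))) sS p :=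
    fun p _ => (hasFDerivAt_Phi σ p).hasFDerivWithinAt
  rw [← image_Phi hσ,
    integrableOn_image_iff_integrableOn_abs_det_fderiv_smul volume measurableSet_sS hf'
      (injOn_Phi hσ) (fun p => dot3 (bb p) (grad3 φ p))]
  apply IntegrableOn.congr_fun ((integrable_GG hφ hsupp hσ).integrableOn)
    (fun p hp => (key_identity hφ hσ p hp).symm) measurableSet_sS

end MainAux

/-- The vector field `b` is divergence-free in the sense of distributions on all of `ℝ³`:
for every smooth compactly supported `φ : ℝ³ → ℝ`, `∫_{ℝ³} b · ∇φ dx = 0`. -/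
theorem bb_divergence_free :
    ∀ φ : ℝ × ℝ × ℝ → ℝ, ContDiff ℝ (⊤ : ℕ∞) φ → HasCompactSupport φ →
      ∫ x, dot3 (bb x) (grad3 φ x) ∂volume = 0 := by
  intro φ hφ hsupp
  set f : ℝ × ℝ × ℝ → ℝ := fun x => dot3 (bb x) (grad3 φ x) with hf
  have h1 : (1:ℝ) = 1 ∨ (1:ℝ) = -1 := Or.inl rfl
  have hm1 : (-1:ℝ) = 1 ∨ (-1:ℝ) = -1 := Or.inr rfl
  set Aplus : Set (ℝ × ℝ × ℝ) := {p | 0 < (1:ℝ) * p.2.2} with hAp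
  set Aminus : Set (ℝ × ℝ × ℝ) := {p | 0 < (-1:ℝ) * p.2.2} with hAm
  have hmp : MeasurableSet Aplus := by
    apply measurableSet_lt measurable_const
    exact (measurable_snd.comp measurable_snd).const_mul _
  have hmm : MeasurableSet Aminus := by
    apply measurableSet_lt measurable_const
    exact (measurable_snd.comp measurable_snd).const_mul _
  have hdisj : Disjoint Aplus Aminus := by
    rw [Set.disjoint_left]
    intro p hp hq
    simp only [hAp, hAm, mem_setOf_eq, one_mul, neg_one_mul, neg_pos] at hp hq
    exact absurd hq (lt_asymm hp)
  have hzero : ∀ p : ℝ × ℝ × ℝ, p ∉ Aplus ∪ Aminus → f p = 0 := by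
    intro p hp
    simp only [hAp, hAm, Set.mem_union, mem_setOf_eq, one_mul, neg_one_mul, neg_pos,
      not_or, not_lt] at hp
    have hz : p.2.2 = 0 := le_antisymm hp.1 hp.2
    have : bb p = (0, 0, 0) := by
      rw [bb, if_neg]
      rintro ⟨-, h⟩
      exact h hz
    rw [hf]; simp [this, dot3]
  have hind : f = (Aplus ∪ Aminus).indicator f := by
    funext p
    by_cases hp : p ∈ Aplus ∪ Aminus
    · rw [indicator_of_mem hp]
    · rw [indicator_of_notMem hp, hzero p hp]
  calc ∫ x, f x ∂volume = ∫ x, (Aplus ∪ Aminus).indicator f x := by rw [← hind]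
    _ = ∫ x in Aplus ∪ Aminus, f x := integral_indicator (hmp.union hmm)
    _ = (∫ x in Aplus, f x) + ∫ x in Aminus, f x :=
        setIntegral_union hdisj hmm (integrableOn_half hφ hsupp h1) (integrableOn_half hφ hsupp hm1)
    _ = (∫ p, GG 1 φ p) + ∫ p, GG (-1) φ p := by
        rw [setIntegral_half hφ hsupp h1, setIntegral_half hφ hsupp hm1]
    _ = 0 := by
        rw [integral_GG hφ hsupp h1, integral_GG hφ hsupp hm1]
        ring

end
end

section
/- The vector field b satisfies the growth condition of Ambrosio's uniqueness theorem: there exist functions f ∈ L¹(ℝ³;ℝ³) and g ∈ L^∞(ℝ³;ℝ³) such that b(x)/(1+|x|) = f(x) + g(x) for almost every x ∈ ℝ³. -/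
open MeasureTheory Real Set Filter Topology
open scoped ENNReal

noncomputable section

/-! On `P` we have `x² + y² ≤ |z|`, so `|x|/z², |y|/z² ≤ |z|^(-3/2)`. Hence `b` is bounded by `2`
where `|z| ≥ 1`, and by `2 |z|^(-3/2)` where `|z| ≤ 1`. On that slab the singularity is split among
the three coordinates: `|z|^(-3/8) ≤ |x|^(-3/4)` and `|z|^(-3/8) ≤ |y|^(-3/4)` give
`|b| ≤ 2 ψ(x) ψ(y) ψ(z)` with `ψ(t) = |t|^(-3/4)` on `[-1, 1]`, an integrable product. -/

@[fun_prop]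
lemma Real.measurable_sign : Measurable Real.sign :=
  Measurable.ite (measurableSet_lt measurable_id measurable_const) measurable_const
    (Measurable.ite (measurableSet_lt measurable_const measurable_id) measurable_const
      measurable_const)

lemma Real.abs_sign_of_ne_zero {r : ℝ} (hr : r ≠ 0) : |Real.sign r| = 1 := by
  rcases Real.sign_apply_eq_of_ne_zero r hr with h | h <;> simp [h]

lemma norm_inv_one_add_smul_le {F : Type*} [SeminormedAddCommGroup F] [NormedSpace ℝ F]
    {t : ℝ} (ht : 0 ≤ t) (v : F) : ‖(1 + t)⁻¹ • v‖ ≤ ‖v‖ := by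
  rw [norm_smul, norm_inv, Real.norm_of_nonneg (by positivity)]
  exact mul_le_of_le_one_left (norm_nonneg v) (inv_le_one_of_one_le₀ (by linarith))

lemma abs_div_sq_le_rpow {a z : ℝ} (hz : z ≠ 0) (h : a ^ 2 ≤ |z|) :
    |a| / z ^ 2 ≤ |z| ^ (-3 / 2 : ℝ) := by
  have hz' : 0 < |z| := abs_pos.2 hz
  calc |a| / z ^ 2 ≤ |z| ^ (1 / 2 : ℝ) / |z| ^ (2 : ℝ) := by
        rw [← sqrt_eq_rpow, rpow_two, sq_abs]; gcongr; exact abs_le_sqrt h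
    _ = |z| ^ (-3 / 2 : ℝ) := by rw [← rpow_sub hz']; norm_num

lemma rpow_half_le_abs_rpow {a t r : ℝ} (ha : a ≠ 0) (h : a ^ 2 ≤ t) (hr : r ≤ 0) :
    t ^ (r / 2) ≤ |a| ^ r := by
  calc t ^ (r / 2) ≤ (a ^ 2) ^ (r / 2) := rpow_le_rpow_of_nonpos (by positivity) h (by linarith)
    _ = |a| ^ r := by
      rw [← sq_abs, ← rpow_natCast, ← rpow_mul (abs_nonneg a)]; ring_nf

lemma locallyIntegrable_abs_rpow {r : ℝ} (hr : -1 < r) :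
    LocallyIntegrable (fun t : ℝ => |t| ^ r) :=
  locallyIntegrable_of_norm_le_rpow (C := 1) (α := -r) (by simp) (by simp; linarith)
    (ae_of_all _ fun t => by simp [abs_rpow_of_nonneg])
    (continuous_abs.measurable.pow_const r).aestronglyMeasurable

lemma measurableSet_PP : MeasurableSet PP :=
  (measurableSet_le (by fun_prop) (by fun_prop)).union
    (measurableSet_le (by fun_prop) (by fun_prop))

@[fun_prop]
lemma measurable_bb : Measurable bb :=
  Measurable.ite (measurableSet_PP.inter (measurable_snd.snd (measurableSet_singleton 0).compl))
    (by fun_prop) measurable_const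

lemma sq_add_sq_le_abs_of_mem_PP {p : ℝ × ℝ × ℝ} (hp : p ∈ PP) :
    p.1 ^ 2 + p.2.1 ^ 2 ≤ |p.2.2| :=
  hp.elim (fun h => h.trans (le_abs_self _)) (fun h => h.trans (neg_le_abs _))

lemma bb_of_not_mem {p : ℝ × ℝ × ℝ} (h : ¬(p ∈ PP ∧ p.2.2 ≠ 0)) : bb p = 0 := by
  rw [bb, if_neg h]; rfl

lemma norm_bb_of_mem {p : ℝ × ℝ × ℝ} (hp : p ∈ PP) (hz : p.2.2 ≠ 0) :
    ‖bb p‖ = max (|p.1| / p.2.2 ^ 2) (max (|p.2.1| / p.2.2 ^ 2) (2 / |p.2.2|)) := by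
  simp only [bb, if_pos (And.intro hp hz), Prod.norm_def, Real.norm_eq_abs, abs_div, abs_mul,
    abs_neg, Real.abs_sign_of_ne_zero hz, one_mul, abs_pow, sq_abs, abs_abs, abs_two]

lemma norm_bb_le (p : ℝ × ℝ × ℝ) : ‖bb p‖ ≤ max (|p.2.2| ^ (-3 / 2 : ℝ)) (2 / |p.2.2|) := by
  by_cases h : p ∈ PP ∧ p.2.2 ≠ 0
  · obtain ⟨hp, hz⟩ := h
    have hxy := sq_add_sq_le_abs_of_mem_PP hp
    rw [norm_bb_of_mem hp hz]
    exact max_le (le_max_of_le_left (abs_div_sq_le_rpow hz (by nlinarith)))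
      (max_le_max_right _ (abs_div_sq_le_rpow hz (by nlinarith)))
  · rw [bb_of_not_mem h, norm_zero]
    positivity

lemma norm_bb_le_two {p : ℝ × ℝ × ℝ} (hz : 1 ≤ |p.2.2|) : ‖bb p‖ ≤ 2 := by
  refine (norm_bb_le p).trans (max_le ?_ ?_)
  · calc |p.2.2| ^ (-3 / 2 : ℝ) ≤ 1 := rpow_le_one_of_one_le_of_nonpos hz (by norm_num)
      _ ≤ 2 := one_le_two
  · rw [div_le_iff₀ (by linarith)]; linarith

lemma norm_bb_le_rpow {p : ℝ × ℝ × ℝ} (hz : |p.2.2| ≤ 1) :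
    ‖bb p‖ ≤ 2 * |p.2.2| ^ (-3 / 2 : ℝ) := by
  rcases (abs_nonneg p.2.2).eq_or_lt with hz0 | hz0
  · simpa [← hz0] using norm_bb_le p
  refine (norm_bb_le p).trans (max_le ?_ ?_)
  · linarith [rpow_nonneg hz0.le (-3 / 2 : ℝ)]
  calc 2 / |p.2.2| = 2 * |p.2.2| ^ (-1 : ℝ) := by rw [rpow_neg_one, div_eq_mul_inv]
    _ ≤ 2 * |p.2.2| ^ (-3 / 2 : ℝ) :=
        mul_le_mul_of_nonneg_left (rpow_le_rpow_of_exponent_ge hz0 hz (by norm_num)) two_pos.le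

def cutoffAbsRpow (r : ℝ) : ℝ → ℝ := (Icc (-1) 1).indicator fun t => |t| ^ r

lemma integrable_cutoffAbsRpow {r : ℝ} (hr : -1 < r) : Integrable (cutoffAbsRpow r) :=
  (integrable_indicator_iff measurableSet_Icc).2
    ((locallyIntegrable_abs_rpow hr).integrableOn_isCompact isCompact_Icc)

lemma cutoffAbsRpow_nonneg (r t : ℝ) : 0 ≤ cutoffAbsRpow r t :=
  indicator_nonneg (fun t _ => rpow_nonneg (abs_nonneg t) r) t

lemma cutoffAbsRpow_of_abs_le_one {r t : ℝ} (ht : |t| ≤ 1) : cutoffAbsRpow r t = |t| ^ r :=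
  indicator_of_mem (show t ∈ Icc (-1) 1 from abs_le.1 ht) _

lemma norm_bb_le_cutoffAbsRpow {p : ℝ × ℝ × ℝ} (hx : p.1 ≠ 0) (hy : p.2.1 ≠ 0)
    (hz : |p.2.2| ≤ 1) :
    ‖bb p‖ ≤ 2 * (cutoffAbsRpow (-3 / 4) p.1 *
      (cutoffAbsRpow (-3 / 4) p.2.1 * cutoffAbsRpow (-3 / 4) p.2.2)) := by
  by_cases hp : p ∈ PP
  · have hxy := sq_add_sq_le_abs_of_mem_PP hp
    have hx2 : p.1 ^ 2 ≤ |p.2.2| := by nlinarith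
    have hy2 : p.2.1 ^ 2 ≤ |p.2.2| := by nlinarith
    have hz0 : 0 < |p.2.2| := (pow_pos (abs_pos.2 hx) 2).trans_le (by rwa [sq_abs])
    rw [cutoffAbsRpow_of_abs_le_one hz,
      cutoffAbsRpow_of_abs_le_one ((sq_le_one_iff_abs_le_one _).1 (hx2.trans hz)),
      cutoffAbsRpow_of_abs_le_one ((sq_le_one_iff_abs_le_one _).1 (hy2.trans hz))]
    calc ‖bb p‖ ≤ 2 * |p.2.2| ^ (-3 / 2 : ℝ) := norm_bb_le_rpow hz
      _ = 2 * (|p.2.2| ^ ((-3 / 4 : ℝ) / 2) *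
          (|p.2.2| ^ ((-3 / 4 : ℝ) / 2) * |p.2.2| ^ (-3 / 4 : ℝ))) := by
        rw [← rpow_add hz0, ← rpow_add hz0]; norm_num
      _ ≤ _ := by
        gcongr
        · exact rpow_half_le_abs_rpow hx hx2 (by norm_num)
        · exact rpow_half_le_abs_rpow hy hy2 (by norm_num)
  · rw [bb_of_not_mem (fun h => hp h.1), norm_zero]
    exact mul_nonneg zero_le_two (mul_nonneg (cutoffAbsRpow_nonneg _ _)
      (mul_nonneg (cutoffAbsRpow_nonneg _ _) (cutoffAbsRpow_nonneg _ _)))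

lemma integrable_indicator_smul_bb :
    Integrable ({p : ℝ × ℝ × ℝ | |p.2.2| ≤ 1}.indicator fun p => (1 + ‖p‖)⁻¹ • bb p) := by
  have hψ := integrable_cutoffAbsRpow (r := -3 / 4) (by norm_num)
  refine ((hψ.mul_prod (hψ.mul_prod hψ)).const_mul 2).mono'
    ((Measurable.indicator (by fun_prop) (measurableSet_le (by fun_prop) measurable_const))
      |>.aestronglyMeasurable) ?_
  -- the planes `x = 0`, `y = 0` are excluded because of the junk value `0 ^ (-3/4) = 0`
  filter_upwards [Measure.quasiMeasurePreserving_fst.ae (Measure.ae_ne volume 0),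
    (Measure.quasiMeasurePreserving_fst.comp Measure.quasiMeasurePreserving_snd).ae
      (Measure.ae_ne volume 0)] with p hx hy
  rw [norm_indicator_eq_indicator_norm]
  refine indicator_apply_le' (fun hz => (norm_inv_one_add_smul_le (norm_nonneg p) _).trans
    (norm_bb_le_cutoffAbsRpow hx hy hz)) (fun _ => ?_)
  exact mul_nonneg zero_le_two (mul_nonneg (cutoffAbsRpow_nonneg _ _)
    (mul_nonneg (cutoffAbsRpow_nonneg _ _) (cutoffAbsRpow_nonneg _ _)))

/-- Growth condition: `b(x)/(1+|x|)` splits as `f + g` with `f ∈ L¹(ℝ³;ℝ³)` and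
`g ∈ L^∞(ℝ³;ℝ³)`. -/
theorem bb_growth_condition :
    ∃ f g : ℝ × ℝ × ℝ → ℝ × ℝ × ℝ,
      MeasureTheory.Integrable f volume ∧
      (∃ C : ℝ, ∀ᵐ x : ℝ × ℝ × ℝ ∂volume, ‖g x‖ ≤ C) ∧
      ∀ᵐ x : ℝ × ℝ × ℝ ∂volume, (1 + ‖x‖)⁻¹ • bb x = f x + g x := by
  set S := {p : ℝ × ℝ × ℝ | |p.2.2| ≤ 1}
  set h := fun p : ℝ × ℝ × ℝ => (1 + ‖p‖)⁻¹ • bb p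
  refine ⟨S.indicator h, Sᶜ.indicator h, integrable_indicator_smul_bb, ⟨2, ae_of_all _ fun p => ?_⟩,
    ae_of_all _ fun p => (indicator_self_add_compl_apply S h p).symm⟩
  rw [norm_indicator_eq_indicator_norm]
  exact indicator_apply_le' (fun hz => (norm_inv_one_add_smul_le (norm_nonneg p) _).trans
    (norm_bb_le_two (le_of_not_ge hz))) (fun _ => zero_le_two)

end
end

section
/- For every point (x,y,z) in the open lower paraboloid, i.e. with x²+y² ≤ −z and z < 0, the curve X(t) = ( (x/√(−z))·(z²+4t)^{1/4}, (y/√(−z))·(z²+4t)^{1/4}, −√(z²+4t) ) is differentiable on (0,∞), satisfies X(0) = (x,y,z), remains in P⁻ for all t ≥ 0, and satisfies X'(t) = b(X(t)) for every t > 0. -/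
open MeasureTheory Real Set Filter Topology
open scoped ENNReal

noncomputable section

/-- For every point of the (open) lower paraboloid, the explicit curve
`X(t) = ((x/√(−z))·(z²+4t)^{1/4}, (y/√(−z))·(z²+4t)^{1/4}, −√(z²+4t))`
starts at `(x,y,z)`, stays in `P⁻` for all `t ≥ 0`, and solves `X' = b(X)` on `(0,∞)`
(in particular it is differentiable there). -/
theorem lower_paraboloid_trajectory (x y z : ℝ) (hz : z < 0) (hP : x ^ 2 + y ^ 2 ≤ -z) :
    let X : ℝ → ℝ × ℝ × ℝ := fun t =>
      (x / Real.sqrt (-z) * (z ^ 2 + 4 * t) ^ ((1 : ℝ) / 4),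
       y / Real.sqrt (-z) * (z ^ 2 + 4 * t) ^ ((1 : ℝ) / 4),
       -Real.sqrt (z ^ 2 + 4 * t))
    X 0 = (x, y, z) ∧
    (∀ t : ℝ, 0 ≤ t → X t ∈ Pminus) ∧
    (∀ t : ℝ, 0 < t → HasDerivAt X (bb (X t)) t) := by
  intro X
  have hnz : (0:ℝ) < -z := neg_pos.2 hz
  have hsnz : (0:ℝ) < Real.sqrt (-z) := Real.sqrt_pos.2 hnz
  have hsz : Real.sqrt (-z) ≠ 0 := hsnz.ne'
  have hz2 : (0:ℝ) < z ^ 2 := by nlinarith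
  -- square of the quarter power
  have hq : ∀ u : ℝ, 0 < u → (u ^ ((1:ℝ)/4)) ^ 2 = Real.sqrt u := by
    intro u hu
    rw [← Real.rpow_natCast (u ^ ((1:ℝ)/4)) 2, ← Real.rpow_mul hu.le, Real.sqrt_eq_rpow]
    norm_num
  have hX0 : X 0 = (x, y, z) := by
    have h1 : z ^ 2 + 4 * 0 = (-z) ^ 2 := by ring
    have h2 : ((-z) ^ 2 : ℝ) ^ ((1:ℝ)/4) = Real.sqrt (-z) := by
      rw [← Real.rpow_natCast (-z) 2, ← Real.rpow_mul hnz.le, Real.sqrt_eq_rpow]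
      norm_num
    have h3 : Real.sqrt ((-z) ^ 2) = -z := Real.sqrt_sq hnz.le
    show (_, _, _) = (x, y, z)
    rw [h1, h2, h3]
    field_simp
  refine ⟨hX0, ?_, ?_⟩
  · intro t ht
    have hu : (0:ℝ) < z ^ 2 + 4 * t := by nlinarith
    have hsqnn : (0:ℝ) ≤ Real.sqrt (z ^ 2 + 4 * t) := Real.sqrt_nonneg _
    show (x / Real.sqrt (-z) * (z ^ 2 + 4 * t) ^ ((1:ℝ)/4)) ^ 2 +
        (y / Real.sqrt (-z) * (z ^ 2 + 4 * t) ^ ((1:ℝ)/4)) ^ 2 ≤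
        -(-Real.sqrt (z ^ 2 + 4 * t))
    have hsq : ((z ^ 2 + 4 * t) ^ ((1:ℝ)/4)) ^ 2 = Real.sqrt (z ^ 2 + 4 * t) := hq _ hu
    have hzsq : (Real.sqrt (-z)) ^ 2 = -z := Real.sq_sqrt hnz.le
    have key : (x ^ 2 + y ^ 2) / (-z) ≤ 1 := (div_le_one hnz).2 hP
    have expand : (x / Real.sqrt (-z) * (z ^ 2 + 4 * t) ^ ((1:ℝ)/4)) ^ 2 +
        (y / Real.sqrt (-z) * (z ^ 2 + 4 * t) ^ ((1:ℝ)/4)) ^ 2 =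
        (x ^ 2 + y ^ 2) / (-z) * Real.sqrt (z ^ 2 + 4 * t) := by
      rw [mul_pow, mul_pow, div_pow, div_pow, hsq, hzsq]
      ring
    rw [expand, neg_neg]
    nlinarith
  · intro t ht
    have hu : (0:ℝ) < z ^ 2 + 4 * t := by nlinarith
    have hsqpos : (0:ℝ) < Real.sqrt (z ^ 2 + 4 * t) := Real.sqrt_pos.2 hu
    have hder : HasDerivAt (fun s : ℝ => z ^ 2 + 4 * s) 4 t := by
      simpa using ((hasDerivAt_id t).const_mul 4).const_add (z ^ 2)
    have h14 : HasDerivAt (fun s : ℝ => (z ^ 2 + 4 * s) ^ ((1:ℝ)/4))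
        (4 * ((1:ℝ)/4) * (z ^ 2 + 4 * t) ^ ((1:ℝ)/4 - 1)) t :=
      hder.rpow_const (Or.inl hu.ne')
    have h1 := h14.const_mul (x / Real.sqrt (-z))
    have h2 := h14.const_mul (y / Real.sqrt (-z))
    have h3 : HasDerivAt (fun s : ℝ => -Real.sqrt (z ^ 2 + 4 * s))
        (-(4 / (2 * Real.sqrt (z ^ 2 + 4 * t)))) t := (hder.sqrt hu.ne').neg
    have hXd : HasDerivAt X
        (x / Real.sqrt (-z) * (4 * ((1:ℝ)/4) * (z ^ 2 + 4 * t) ^ ((1:ℝ)/4 - 1)),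
         y / Real.sqrt (-z) * (4 * ((1:ℝ)/4) * (z ^ 2 + 4 * t) ^ ((1:ℝ)/4 - 1)),
         -(4 / (2 * Real.sqrt (z ^ 2 + 4 * t)))) t := h1.prodMk (h2.prodMk h3)
    convert hXd using 1
    -- now show bb (X t) equals the derivative triple
    have hmem : X t ∈ PP ∧ (X t).2.2 ≠ 0 := by
      constructor
      · exact Or.inr (by
          have := hq (z ^ 2 + 4 * t) hu
          show (x / Real.sqrt (-z) * (z ^ 2 + 4 * t) ^ ((1:ℝ)/4)) ^ 2 +
              (y / Real.sqrt (-z) * (z ^ 2 + 4 * t) ^ ((1:ℝ)/4)) ^ 2 ≤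
              -(-Real.sqrt (z ^ 2 + 4 * t))
          have hzsq : (Real.sqrt (-z)) ^ 2 = -z := Real.sq_sqrt hnz.le
          have key : (x ^ 2 + y ^ 2) / (-z) ≤ 1 := (div_le_one hnz).2 hP
          have expand : (x / Real.sqrt (-z) * (z ^ 2 + 4 * t) ^ ((1:ℝ)/4)) ^ 2 +
              (y / Real.sqrt (-z) * (z ^ 2 + 4 * t) ^ ((1:ℝ)/4)) ^ 2 =
              (x ^ 2 + y ^ 2) / (-z) * Real.sqrt (z ^ 2 + 4 * t) := by
            rw [mul_pow, mul_pow, div_pow, div_pow, this, hzsq]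
            ring
          rw [expand, neg_neg]
          nlinarith [Real.sqrt_nonneg (z ^ 2 + 4 * t)])
      · show -Real.sqrt (z ^ 2 + 4 * t) ≠ 0
        simpa using hsqpos.ne'
    have hsign : Real.sign (X t).2.2 = -1 := Real.sign_of_neg (by
      show -Real.sqrt (z ^ 2 + 4 * t) < 0; linarith)
    rw [bb, if_pos hmem, hsign]
    have habs : |(X t).2.2| = Real.sqrt (z ^ 2 + 4 * t) := by
      show |-Real.sqrt (z ^ 2 + 4 * t)| = _
      rw [abs_neg, abs_of_nonneg hsqpos.le]
    have hz2sq : ((X t).2.2) ^ 2 = z ^ 2 + 4 * t := by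
      show (-Real.sqrt (z ^ 2 + 4 * t)) ^ 2 = _
      rw [neg_sq, Real.sq_sqrt hu.le]
    have hpow : (z ^ 2 + 4 * t) ^ ((1:ℝ)/4) / (z ^ 2 + 4 * t)
        = (z ^ 2 + 4 * t) ^ ((1:ℝ)/4 - 1) := by
      rw [Real.rpow_sub hu, Real.rpow_one]
    refine Prod.ext ?_ (Prod.ext ?_ ?_)
    · show -(-1) * (X t).1 / ((X t).2.2) ^ 2 = _
      rw [hz2sq]
      show -(-1) * (x / Real.sqrt (-z) * (z ^ 2 + 4 * t) ^ ((1:ℝ)/4)) / (z ^ 2 + 4 * t) = _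
      rw [← hpow]
      ring
    · show -(-1) * (X t).2.1 / ((X t).2.2) ^ 2 = _
      rw [hz2sq]
      show -(-1) * (y / Real.sqrt (-z) * (z ^ 2 + 4 * t) ^ ((1:ℝ)/4)) / (z ^ 2 + 4 * t) = _
      rw [← hpow]
      ring
    · show -2 / |(X t).2.2| = -(4 / (2 * Real.sqrt (z ^ 2 + 4 * t)))
      rw [habs]
      ring

end
end

section
/- For every point (x,y,z) in the upper paraboloid with x²+y² ≤ z and z > 0, the curve X(t) = ( (x/√z)·(z²−4t)^{1/4}, (y/√z)·(z²−4t)^{1/4}, √(z²−4t) ) is differentiable on (0, z²/4), satisfies X(0) = (x,y,z), remains in P⁺ for 0 ≤ t < z²/4, satisfies X'(t) = b(X(t)) for every t ∈ (0, z²/4), and reaches the origin as t → z²/4: lim_{t→z²/4} X(t) = (0,0,0). -/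
open MeasureTheory Real Set Filter Topology
open scoped ENNReal

noncomputable section

/-- For every point of the upper paraboloid with `z > 0`, the explicit curve
`X(t) = ((x/√z)·(z²−4t)^{1/4}, (y/√z)·(z²−4t)^{1/4}, √(z²−4t))`
starts at `(x,y,z)`, stays in `P⁺` for `0 ≤ t < z²/4`, solves `X' = b(X)` on `(0, z²/4)`
(in particular it is differentiable there), and tends to the origin as `t → z²/4⁻`. -/
theorem upper_paraboloid_trajectory (x y z : ℝ) (hz : 0 < z) (hP : x ^ 2 + y ^ 2 ≤ z) :
    let X : ℝ → ℝ × ℝ × ℝ := fun t =>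
      (x / Real.sqrt z * (z ^ 2 - 4 * t) ^ ((1 : ℝ) / 4),
       y / Real.sqrt z * (z ^ 2 - 4 * t) ^ ((1 : ℝ) / 4),
       Real.sqrt (z ^ 2 - 4 * t))
    X 0 = (x, y, z) ∧
    (∀ t : ℝ, 0 ≤ t → t < z ^ 2 / 4 → X t ∈ Pplus) ∧
    (∀ t : ℝ, t ∈ Set.Ioo 0 (z ^ 2 / 4) → HasDerivAt X (bb (X t)) t) ∧
    Filter.Tendsto X (nhdsWithin (z ^ 2 / 4) (Set.Iio (z ^ 2 / 4)))
      (nhds ((0 : ℝ), (0 : ℝ), (0 : ℝ))) := by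
  intro X
  have hzle : (0:ℝ) ≤ z := hz.le
  have hsz : (0:ℝ) < Real.sqrt z := Real.sqrt_pos.mpr hz
  have hz2 : Real.sqrt z ^ 2 = z := Real.sq_sqrt hzle
  -- membership lemma
  have hmem : ∀ t : ℝ, 0 < z ^ 2 - 4 * t → X t ∈ Pplus := by
    intro t hs
    set s : ℝ := z ^ 2 - 4 * t with hsdef
    have hq2 : (s ^ ((1:ℝ)/4)) ^ 2 = Real.sqrt s := by
      rw [← Real.rpow_natCast (s ^ ((1:ℝ)/4)) 2, ← Real.rpow_mul hs.le, Real.sqrt_eq_rpow]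
      norm_num
    have key : (x / Real.sqrt z * s ^ ((1:ℝ)/4)) ^ 2 + (y / Real.sqrt z * s ^ ((1:ℝ)/4)) ^ 2
        = (x ^ 2 + y ^ 2) * Real.sqrt s / z := by
      rw [← hz2, ← hq2]; field_simp; rw [Real.sqrt_sq hsz.le]
    show (x / Real.sqrt z * s ^ ((1:ℝ)/4)) ^ 2 + (y / Real.sqrt z * s ^ ((1:ℝ)/4)) ^ 2
        ≤ Real.sqrt s
    rw [key, div_le_iff₀ hz]
    nlinarith [Real.sqrt_nonneg s]
  refine ⟨?_, ?_, ?_, ?_⟩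
  · -- initial condition
    have h1 : z ^ 2 - 4 * 0 = z ^ 2 := by ring
    have h2 : (z ^ 2 : ℝ) ^ ((1:ℝ)/4) = Real.sqrt z := by
      rw [← Real.rpow_natCast z 2, ← Real.rpow_mul hzle, Real.sqrt_eq_rpow]
      norm_num
    show (x / Real.sqrt z * (z ^ 2 - 4 * 0) ^ ((1:ℝ)/4),
      y / Real.sqrt z * (z ^ 2 - 4 * 0) ^ ((1:ℝ)/4),
      Real.sqrt (z ^ 2 - 4 * 0)) = (x, y, z)
    rw [h1, h2, Real.sqrt_sq hzle]
    field_simp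
  · intro t _ht0 ht1
    exact hmem t (by linarith)
  · intro t ht
    obtain ⟨ht0, ht1⟩ := ht
    have hs : 0 < z ^ 2 - 4 * t := by linarith
    set s : ℝ := z ^ 2 - 4 * t with hsdef
    have hss : 0 < Real.sqrt s := Real.sqrt_pos.mpr hs
    have h0 : HasDerivAt (fun u : ℝ => z ^ 2 - 4 * u) (-4) t := by
      simpa using (HasDerivAt.const_sub (z ^ 2) ((hasDerivAt_id t).const_mul 4))
    have hq : HasDerivAt (fun u : ℝ => (z ^ 2 - 4 * u) ^ ((1:ℝ)/4))
        (-4 * ((1:ℝ)/4) * s ^ ((1:ℝ)/4 - 1)) t := h0.rpow_const (Or.inl hs.ne')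
    have h1 : HasDerivAt (fun u : ℝ => x / Real.sqrt z * (z ^ 2 - 4 * u) ^ ((1:ℝ)/4))
        (x / Real.sqrt z * (-4 * ((1:ℝ)/4) * s ^ ((1:ℝ)/4 - 1))) t := hq.const_mul _
    have h2 : HasDerivAt (fun u : ℝ => y / Real.sqrt z * (z ^ 2 - 4 * u) ^ ((1:ℝ)/4))
        (y / Real.sqrt z * (-4 * ((1:ℝ)/4) * s ^ ((1:ℝ)/4 - 1))) t := hq.const_mul _
    have h3 : HasDerivAt (fun u : ℝ => Real.sqrt (z ^ 2 - 4 * u))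
        (-4 / (2 * Real.sqrt s)) t := h0.sqrt hs.ne'
    have hX : HasDerivAt X
        (x / Real.sqrt z * (-4 * ((1:ℝ)/4) * s ^ ((1:ℝ)/4 - 1)),
         y / Real.sqrt z * (-4 * ((1:ℝ)/4) * s ^ ((1:ℝ)/4 - 1)),
         -4 / (2 * Real.sqrt s)) t := h1.prodMk (h2.prodMk h3)
    have hXP : X t ∈ PP := Or.inl (hmem t hs)
    have hz3 : (X t).2.2 = Real.sqrt s := rfl
    have hbb : bb (X t) =
        (x / Real.sqrt z * (-4 * ((1:ℝ)/4) * s ^ ((1:ℝ)/4 - 1)),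
         y / Real.sqrt z * (-4 * ((1:ℝ)/4) * s ^ ((1:ℝ)/4 - 1)),
         -4 / (2 * Real.sqrt s)) := by
      rw [bb, if_pos ⟨hXP, by rw [hz3]; exact hss.ne'⟩]
      have hsign : Real.sign ((X t).2.2) = 1 := by rw [hz3]; exact Real.sign_of_pos hss
      have habs : |(X t).2.2| = Real.sqrt s := by rw [hz3, abs_of_pos hss]
      have hsq2 : ((X t).2.2) ^ 2 = s := by rw [hz3]; exact Real.sq_sqrt hs.le
      have hpow : s ^ ((1:ℝ)/4 - 1) = s ^ ((1:ℝ)/4) / s := Real.rpow_sub_one hs.ne' _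
      rw [hsign, habs, hsq2]
      refine Prod.ext ?_ (Prod.ext ?_ ?_)
      · show -1 * (x / Real.sqrt z * s ^ ((1:ℝ)/4)) / s
            = x / Real.sqrt z * (-4 * ((1:ℝ)/4) * s ^ ((1:ℝ)/4 - 1))
        rw [hpow]; field_simp
      · show -1 * (y / Real.sqrt z * s ^ ((1:ℝ)/4)) / s
            = y / Real.sqrt z * (-4 * ((1:ℝ)/4) * s ^ ((1:ℝ)/4 - 1))
        rw [hpow]; field_simp
      · show -2 / Real.sqrt s = -4 / (2 * Real.sqrt s)
        rw [div_eq_div_iff hss.ne' (by positivity)]; ring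
    rw [hbb]
    exact hX
  · -- limit
    have hcont : ContinuousAt X (z ^ 2 / 4) := by
      have hinner : ContinuousAt (fun u : ℝ => z ^ 2 - 4 * u) (z ^ 2 / 4) := by fun_prop
      have hval : z ^ 2 - 4 * (z ^ 2 / 4) = 0 := by ring
      have hr : ContinuousAt (fun u : ℝ => (z ^ 2 - 4 * u) ^ ((1:ℝ)/4)) (z ^ 2 / 4) := by
        have h2 : ContinuousAt (fun v : ℝ => v ^ ((1:ℝ)/4)) (z ^ 2 - 4 * (z ^ 2 / 4)) := by
          rw [hval]; exact Real.continuousAt_rpow_const 0 _ (Or.inr (by norm_num))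
        exact ContinuousAt.comp (g := fun v : ℝ => v ^ ((1:ℝ)/4))
          (f := fun u : ℝ => z ^ 2 - 4 * u) h2 hinner
      have hsqc : ContinuousAt (fun u : ℝ => Real.sqrt (z ^ 2 - 4 * u)) (z ^ 2 / 4) :=
        (Real.continuous_sqrt.continuousAt).comp hinner
      exact ((continuousAt_const.mul hr).prodMk ((continuousAt_const.mul hr).prodMk hsqc))
    have hXval : X (z ^ 2 / 4) = ((0:ℝ), (0:ℝ), (0:ℝ)) := by
      have hval : z ^ 2 - 4 * (z ^ 2 / 4) = 0 := by ring
      show (x / Real.sqrt z * (z ^ 2 - 4 * (z ^ 2 / 4)) ^ ((1:ℝ)/4),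
        y / Real.sqrt z * (z ^ 2 - 4 * (z ^ 2 / 4)) ^ ((1:ℝ)/4),
        Real.sqrt (z ^ 2 - 4 * (z ^ 2 / 4))) = ((0:ℝ), (0:ℝ), (0:ℝ))
      rw [hval, Real.zero_rpow (by norm_num), Real.sqrt_zero]
      simp
    have := hcont.continuousWithinAt (s := Set.Iio (z ^ 2 / 4))
    rw [ContinuousWithinAt, hXval] at this
    exact this

end
end

section
/- The quantity (x²+y²)/|z| is conserved by trajectories of b inside the paraboloids: if X = (X₁,X₂,X₃) : I → ℝ³ is a differentiable curve on an open interval I with X(t) ∈ P and X₃(t) ≠ 0 for all t ∈ I, satisfying X'(t) = b(X(t)) for all t ∈ I, then the function t ↦ (X₁(t)² + X₂(t)²)/|X₃(t)| is constant on I. -/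
open MeasureTheory Real Set Filter Topology
open scoped ENNReal

noncomputable section

lemma hasDerivAt_fst' {f : ℝ → ℝ × ℝ × ℝ} {v : ℝ × ℝ × ℝ} {t : ℝ} (h : HasDerivAt f v t) :
    HasDerivAt (fun t => (f t).1) v.1 t := by
  simpa using h.hasFDerivAt.fst.hasDerivAt

lemma hasDerivAt_snd_fst {f : ℝ → ℝ × ℝ × ℝ} {v : ℝ × ℝ × ℝ} {t : ℝ} (h : HasDerivAt f v t) :
    HasDerivAt (fun t => (f t).2.1) v.2.1 t := by
  simpa using h.hasFDerivAt.snd.fst.hasDerivAt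

lemma hasDerivAt_snd_snd {f : ℝ → ℝ × ℝ × ℝ} {v : ℝ × ℝ × ℝ} {t : ℝ} (h : HasDerivAt f v t) :
    HasDerivAt (fun t => (f t).2.2) v.2.2 t := by
  simpa using h.hasFDerivAt.snd.snd.hasDerivAt

/-- The quantity `(x² + y²)/|z|` is conserved along trajectories of `b` inside the
paraboloids: if `X : (a,b) → ℝ³` is differentiable with `X' = b(X)`, `X(t) ∈ P` and
`X₃(t) ≠ 0` on the open interval `(a,b)`, then `t ↦ (X₁(t)² + X₂(t)²)/|X₃(t)|` is constant. -/
theorem conserved_quantity (a c : ℝ) (X : ℝ → ℝ × ℝ × ℝ)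
    (hmem : ∀ t ∈ Set.Ioo a c, X t ∈ PP)
    (hz : ∀ t ∈ Set.Ioo a c, (X t).2.2 ≠ 0)
    (hode : ∀ t ∈ Set.Ioo a c, HasDerivAt X (bb (X t)) t) :
    ∀ s ∈ Set.Ioo a c, ∀ t ∈ Set.Ioo a c,
      ((X s).1 ^ 2 + (X s).2.1 ^ 2) / |(X s).2.2| =
        ((X t).1 ^ 2 + (X t).2.1 ^ 2) / |(X t).2.2| := by
  set g : ℝ → ℝ := fun t => ((X t).1 ^ 2 + (X t).2.1 ^ 2) / |(X t).2.2| with hg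
  have key : ∀ t ∈ Set.Ioo a c, HasDerivAt g 0 t := by
    intro t ht
    have hzt := hz t ht
    have hmt := hmem t ht
    have hX := hode t ht
    have hb : bb (X t) = (-(Real.sign (X t).2.2) * (X t).1 / (X t).2.2 ^ 2,
        -(Real.sign (X t).2.2) * (X t).2.1 / (X t).2.2 ^ 2, -2 / |(X t).2.2|) := by
      rw [bb]
      simp [hmt, hzt]
    rw [hb] at hX
    have h1 := hasDerivAt_fst' hX
    have h2 := hasDerivAt_snd_fst hX
    have h3 := hasDerivAt_snd_snd hX
    simp only at h1 h2 h3
    have habs : HasDerivAt (fun t => |(X t).2.2|)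
        ((SignType.sign (X t).2.2 : ℝ) * (-2 / |(X t).2.2|)) t := by
      have := (hasDerivAt_abs hzt).comp t h3
      exact this
    have hnum : HasDerivAt (fun t => (X t).1 ^ 2 + (X t).2.1 ^ 2)
        (2 * (X t).1 ^ 1 * (-(Real.sign (X t).2.2) * (X t).1 / (X t).2.2 ^ 2)
          + 2 * (X t).2.1 ^ 1 * (-(Real.sign (X t).2.2) * (X t).2.1 / (X t).2.2 ^ 2)) t := by
      exact (h1.pow 2).add (h2.pow 2)
    have hane : |(X t).2.2| ≠ 0 := abs_ne_zero.mpr hzt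
    have hdiv : HasDerivAt g _ t := hnum.div habs hane
    convert hdiv using 1
    rcases hzt.lt_or_gt with h | h
    · rw [Real.sign_of_neg h, abs_of_neg h]
      rw [show ((SignType.sign (X t).2.2 : ℝ)) = -1 by simp [sign_neg h]]
      field_simp
      ring
    · rw [Real.sign_of_pos h, abs_of_pos h]
      simp only [sign_pos h, SignType.coe_one]
      field_simp
      ring
  intro s hs t ht
  have hdiff : DifferentiableOn ℝ g (Set.Ioo a c) := fun u hu =>
    ((key u hu).differentiableAt).differentiableWithinAt
  have hfz : ∀ u ∈ Set.Ioo a c, fderivWithin ℝ g (Set.Ioo a c) u = 0 := by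
    intro u hu
    have := ((key u hu).hasFDerivAt.hasFDerivWithinAt).fderivWithin
      (isOpen_Ioo.uniqueDiffOn u hu)
    rw [this]
    exact ContinuousLinearMap.ext fun v => by simp
  exact (convex_Ioo a c).is_const_of_fderivWithin_eq_zero hdiff hfz hs ht

end
end

section
/- For every Θ ∈ (0,2π] and every T > 0, the map X^Θ is an integral solution of the ordinary differential equation driven by b: for every point 𝐱 ∈ ℝ³ \ {0}, the map t ↦ X^Θ(t,𝐱) is absolutely continuous on [0,T] and satisfies X^Θ(t,𝐱) = 𝐱 + ∫₀ᵗ b(X^Θ(s,𝐱)) ds for every t ∈ [0,T]. -/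
open MeasureTheory Real Set Filter Topology
open scoped ENNReal

noncomputable section

open scoped Classical in
/-- The flow `X^Θ` of `b`: identity outside `P`; the explicit solution on `P⁻`;
on `P⁺` the trajectory falls to the origin at time `z²/4` and then continues into `P⁻`
rotated by the angle `Θ` in the `xy`-plane. -/
def XTheta (Θ : ℝ) (t : ℝ) (p : ℝ × ℝ × ℝ) : ℝ × ℝ × ℝ :=
  let x := p.1; let y := p.2.1; let z := p.2.2
  if x ^ 2 + y ^ 2 ≤ -z ∧ z < 0 then
    (x / Real.sqrt (-z) * (z ^ 2 + 4 * t) ^ ((1 : ℝ) / 4),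
     y / Real.sqrt (-z) * (z ^ 2 + 4 * t) ^ ((1 : ℝ) / 4),
     -Real.sqrt (z ^ 2 + 4 * t))
  else if x ^ 2 + y ^ 2 ≤ z ∧ 0 < z then
    if t ≤ z ^ 2 / 4 then
      (x / Real.sqrt z * (z ^ 2 - 4 * t) ^ ((1 : ℝ) / 4),
       y / Real.sqrt z * (z ^ 2 - 4 * t) ^ ((1 : ℝ) / 4),
       Real.sqrt (z ^ 2 - 4 * t))
    else
      ((x * Real.cos Θ - y * Real.sin Θ) / Real.sqrt z * (4 * t - z ^ 2) ^ ((1 : ℝ) / 4),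
       (x * Real.sin Θ + y * Real.cos Θ) / Real.sqrt z * (4 * t - z ^ 2) ^ ((1 : ℝ) / 4),
       -Real.sqrt (4 * t - z ^ 2))
  else p

section Helpers

lemma bb_of_neg {X Y w : ℝ} (hw : w < 0) (h : X ^ 2 + Y ^ 2 ≤ -w) :
    bb (X, Y, w) = (X / w ^ 2, Y / w ^ 2, 2 / w) := by
  have hm : (X, Y, w) ∈ PP ∧ (X, Y, w).2.2 ≠ 0 := ⟨Or.inr h, hw.ne⟩
  simp only [bb, if_pos hm]
  rw [Real.sign_of_neg hw, abs_of_neg hw]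
  norm_num

lemma bb_of_pos {X Y w : ℝ} (hw : 0 < w) (h : X ^ 2 + Y ^ 2 ≤ w) :
    bb (X, Y, w) = (-X / w ^ 2, -Y / w ^ 2, -2 / w) := by
  have hm : (X, Y, w) ∈ PP ∧ (X, Y, w).2.2 ≠ 0 := ⟨Or.inl h, hw.ne'⟩
  simp only [bb, if_pos hm]
  rw [Real.sign_of_pos hw, abs_of_pos hw]
  norm_num

lemma bb_zero_z (X Y : ℝ) : bb (X, Y, 0) = 0 := by
  simp [bb]

lemma hd_rpow {f : ℝ → ℝ} {f' s : ℝ} (r : ℝ) (hf : HasDerivAt f f' s) (h : f s ≠ 0) :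
    HasDerivAt (fun t => f t ^ r) (r * f s ^ (r - 1) * f') s :=
  (Real.hasDerivAt_rpow_const (Or.inl h)).comp s hf

lemma hd_sqrt {f : ℝ → ℝ} {f' s : ℝ} (hf : HasDerivAt f f' s) (h : f s ≠ 0) :
    HasDerivAt (fun t => Real.sqrt (f t)) (1 / (2 * Real.sqrt (f s)) * f') s :=
  (Real.hasDerivAt_sqrt h).comp s hf

lemma hd_in1 (z s : ℝ) : HasDerivAt (fun s : ℝ => z ^ 2 + 4 * s) 4 s := by
  exact ((hasDerivAt_const s (z ^ 2)).add ((hasDerivAt_id s).const_mul (4 : ℝ))).congr_deriv (by ring)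

lemma hd_in2 (z s : ℝ) : HasDerivAt (fun s : ℝ => z ^ 2 - 4 * s) (-4) s := by
  exact ((hasDerivAt_const s (z ^ 2)).sub ((hasDerivAt_id s).const_mul (4 : ℝ))).congr_deriv (by ring)

lemma hd_in3 (z s : ℝ) : HasDerivAt (fun s : ℝ => 4 * s - z ^ 2) 4 s := by
  exact (((hasDerivAt_id s).const_mul (4 : ℝ)).sub (hasDerivAt_const s (z ^ 2))).congr_deriv (by ring)

lemma integrableOn_rpow_affine {r : ℝ} (hr : -1 < r) (a b c d : ℝ) (hcd : c ≤ d) :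
    MeasureTheory.IntegrableOn (fun s => (a + b * s) ^ r) (Set.Icc c d) volume := by
  rcases eq_or_ne b 0 with hb | hb
  · simp only [hb, zero_mul, add_zero]
    exact MeasureTheory.integrableOn_const (by simp) (by simp)
  · have h0 : IntervalIntegrable (fun x : ℝ => x ^ r) volume (a + b * c) (a + b * d) :=
      intervalIntegral.intervalIntegrable_rpow' hr
    have h1 := h0.comp_add_left a
    have h2 := h1.comp_mul_left (c := b)
    rw [show (a + b * c - a) / b = c by rw [add_sub_cancel_left]; field_simp, show (a + b * d - a) / b = d by rw [add_sub_cancel_left]; field_simp]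
      at h2
    exact (intervalIntegrable_iff_integrableOn_Icc_of_le hcd).1 h2

lemma quarter_div (k c : ℝ) (hc : 0 < c) :
    k * c ^ ((1 : ℝ) / 4) / c = k * c ^ (-(3 : ℝ) / 4) := by
  rw [div_eq_mul_inv, ← Real.rpow_neg_one c, mul_assoc, ← Real.rpow_add hc]
  norm_num

lemma neg_two_div_sqrt (c : ℝ) (hc : 0 ≤ c) :
    -2 / Real.sqrt c = -2 * c ^ (-(1 : ℝ) / 2) := by
  rw [div_eq_mul_inv, Real.sqrt_eq_rpow, ← Real.rpow_neg hc]
  norm_num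

lemma two_div_neg_sqrt (c : ℝ) (hc : 0 ≤ c) :
    2 / -Real.sqrt c = -2 * c ^ (-(1 : ℝ) / 2) := by
  rw [div_neg, ← neg_div, neg_two_div_sqrt c hc]

lemma sq_aux (k c w : ℝ) (hw : 0 < w) (hc : 0 ≤ c) :
    (k / Real.sqrt w * c ^ ((1 : ℝ) / 4)) ^ 2 = k ^ 2 / w * Real.sqrt c := by
  rw [mul_pow, div_pow, Real.sq_sqrt hw.le,
    ← Real.rpow_natCast (c ^ ((1 : ℝ) / 4)) 2, ← Real.rpow_mul hc]
  norm_num [Real.sqrt_eq_rpow]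

lemma sum_sq_le (x y w c : ℝ) (hw : 0 < w) (hxy : x ^ 2 + y ^ 2 ≤ w) (hc : 0 ≤ c) :
    (x / Real.sqrt w * c ^ ((1 : ℝ) / 4)) ^ 2 + (y / Real.sqrt w * c ^ ((1 : ℝ) / 4)) ^ 2
      ≤ Real.sqrt c := by
  rw [sq_aux x c w hw hc, sq_aux y c w hw hc]
  calc x ^ 2 / w * Real.sqrt c + y ^ 2 / w * Real.sqrt c
      = (x ^ 2 + y ^ 2) / w * Real.sqrt c := by ring
    _ ≤ 1 * Real.sqrt c :=
        mul_le_mul_of_nonneg_right ((div_le_one hw).2 hxy) (Real.sqrt_nonneg c)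
    _ = Real.sqrt c := one_mul _

lemma rpow_quarter_sq (z : ℝ) (hz : 0 < z) : ((z ^ 2) ^ ((1 : ℝ) / 4)) = Real.sqrt z := by
  rw [← Real.rpow_natCast z 2, ← Real.rpow_mul hz.le, Real.sqrt_eq_rpow]
  norm_num

lemma neg_two_rpow_half_eq (c : ℝ) (hc : 0 < c) :
    -2 * c ^ (-(1 : ℝ) / 2) = -(2 / Real.sqrt c) := by
  rw [← neg_two_div_sqrt c hc.le, neg_div]

end Helpers

/-- For every `Θ ∈ (0, 2π]` and `T > 0`, the map `X^Θ` is an integral (absolutely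
continuous) solution of the ODE driven by `b`: for every `𝐱 ∈ ℝ³ \ {0}`,
`s ↦ b(X^Θ(s,𝐱))` is integrable on `[0,T]` and
`X^Θ(t,𝐱) = 𝐱 + ∫₀ᵗ b(X^Θ(s,𝐱)) ds` for every `t ∈ [0,T]`. -/
theorem XTheta_integral_solution (Θ : ℝ) (hΘ : Θ ∈ Set.Ioc 0 (2 * Real.pi))
    (T : ℝ) (hT : 0 < T) (p : ℝ × ℝ × ℝ) (hp : p ≠ 0) :
    MeasureTheory.IntegrableOn (fun s => bb (XTheta Θ s p)) (Set.Icc 0 T) volume ∧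
    ∀ t ∈ Set.Icc (0 : ℝ) T, XTheta Θ t p = p + ∫ s in (0 : ℝ)..t, bb (XTheta Θ s p) := by
  obtain ⟨x, y, z⟩ := p
  by_cases h2 : x ^ 2 + y ^ 2 ≤ -z ∧ z < 0
  · -- the lower paraboloid case
    have hz := h2.2
    have hmz : (0:ℝ) < -z := by linarith
    have hsmz : (0:ℝ) < Real.sqrt (-z) := Real.sqrt_pos.2 hmz
    have hc : ∀ s : ℝ, 0 ≤ s → 0 < z ^ 2 + 4 * s := fun s hs => by nlinarith
    have hF : ∀ s : ℝ, XTheta Θ s (x, y, z) =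
        (x / Real.sqrt (-z) * (z ^ 2 + 4 * s) ^ ((1 : ℝ) / 4),
         y / Real.sqrt (-z) * (z ^ 2 + 4 * s) ^ ((1 : ℝ) / 4),
         -Real.sqrt (z ^ 2 + 4 * s)) := fun s => by
      simp only [XTheta]; rw [if_pos h2]
    have hbbF : ∀ s : ℝ, 0 ≤ s → bb (XTheta Θ s (x, y, z)) =
        (x / Real.sqrt (-z) * (z ^ 2 + 4 * s) ^ (-(3 : ℝ) / 4),
         y / Real.sqrt (-z) * (z ^ 2 + 4 * s) ^ (-(3 : ℝ) / 4),
         -2 * (z ^ 2 + 4 * s) ^ (-(1 : ℝ) / 2)) := by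
      intro s hs
      have hcs := hc s hs
      have hmem : (x / Real.sqrt (-z) * (z ^ 2 + 4 * s) ^ ((1 : ℝ) / 4)) ^ 2 +
          (y / Real.sqrt (-z) * (z ^ 2 + 4 * s) ^ ((1 : ℝ) / 4)) ^ 2
          ≤ -(-Real.sqrt (z ^ 2 + 4 * s)) := by
        rw [neg_neg]; exact sum_sq_le x y (-z) _ hmz h2.1 hcs.le
      rw [hF s, bb_of_neg (neg_lt_zero.2 (Real.sqrt_pos.2 hcs)) hmem]
      have e1 : (-Real.sqrt (z ^ 2 + 4 * s)) ^ 2 = z ^ 2 + 4 * s := by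
        rw [neg_sq]; exact Real.sq_sqrt hcs.le
      simp only [Prod.mk.injEq]
      exact ⟨by rw [e1, quarter_div _ _ hcs], by rw [e1, quarter_div _ _ hcs],
        two_div_neg_sqrt _ hcs.le⟩
    have hderiv : ∀ s : ℝ, 0 ≤ s →
        HasDerivAt (fun r => XTheta Θ r (x, y, z)) (bb (XTheta Θ s (x, y, z))) s := by
      intro s hs
      have hcs := hc s hs
      rw [hbbF s hs, funext hF]
      have h1 : HasDerivAt (fun r : ℝ => x / Real.sqrt (-z) * (z ^ 2 + 4 * r) ^ ((1:ℝ)/4))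
          (x / Real.sqrt (-z) * (z ^ 2 + 4 * s) ^ (-(3:ℝ)/4)) s := by
        have h := (hd_rpow ((1:ℝ)/4) (hd_in1 z s) hcs.ne').const_mul (x / Real.sqrt (-z))
        refine h.congr_deriv ?_
        rw [show (1:ℝ)/4 - 1 = -(3:ℝ)/4 by norm_num]
        ring
      have h2' : HasDerivAt (fun r : ℝ => y / Real.sqrt (-z) * (z ^ 2 + 4 * r) ^ ((1:ℝ)/4))
          (y / Real.sqrt (-z) * (z ^ 2 + 4 * s) ^ (-(3:ℝ)/4)) s := by
        have h := (hd_rpow ((1:ℝ)/4) (hd_in1 z s) hcs.ne').const_mul (y / Real.sqrt (-z))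
        refine h.congr_deriv ?_
        rw [show (1:ℝ)/4 - 1 = -(3:ℝ)/4 by norm_num]
        ring
      have h3 : HasDerivAt (fun r : ℝ => -Real.sqrt (z ^ 2 + 4 * r))
          (-2 * (z ^ 2 + 4 * s) ^ (-(1:ℝ)/2)) s := by
        have h := (hd_sqrt (hd_in1 z s) hcs.ne').neg
        refine h.congr_deriv ?_
        rw [neg_two_rpow_half_eq _ hcs]
        have h0 : Real.sqrt (z ^ 2 + 4 * s) ≠ 0 := (Real.sqrt_pos.2 hcs).ne'
        field_simp
        ring
      exact h1.prodMk (h2'.prodMk h3)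
    have hint : MeasureTheory.IntegrableOn (fun s => bb (XTheta Θ s (x, y, z)))
        (Set.Icc 0 T) volume := by
      have hg1 : MeasureTheory.IntegrableOn
          (fun s : ℝ => (z ^ 2 + 4 * s) ^ (-(3:ℝ)/4)) (Set.Icc 0 T) volume :=
        integrableOn_rpow_affine (by norm_num) (z ^ 2) 4 0 T hT.le
      have hg2 : MeasureTheory.IntegrableOn
          (fun s : ℝ => (z ^ 2 + 4 * s) ^ (-(1:ℝ)/2)) (Set.Icc 0 T) volume :=
        integrableOn_rpow_affine (by norm_num) (z ^ 2) 4 0 T hT.le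
      have hG := (hg1.const_mul (x / Real.sqrt (-z))).prodMk
        ((hg1.const_mul (y / Real.sqrt (-z))).prodMk (hg2.const_mul (-2)))
      exact MeasureTheory.IntegrableOn.congr_fun hG (fun s hs => (hbbF s hs.1).symm)
        measurableSet_Icc
    refine ⟨hint, fun t ht => ?_⟩
    have hti : IntervalIntegrable (fun s => bb (XTheta Θ s (x, y, z))) volume 0 t :=
      (intervalIntegrable_iff_integrableOn_Icc_of_le ht.1).2
        (hint.mono_set (Set.Icc_subset_Icc le_rfl ht.2))
    have key : ∫ s in (0:ℝ)..t, bb (XTheta Θ s (x, y, z)) =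
        XTheta Θ t (x, y, z) - XTheta Θ 0 (x, y, z) := by
      refine intervalIntegral.integral_eq_sub_of_hasDerivAt
        (f := fun r => XTheta Θ r (x, y, z)) (fun s hs => ?_) hti
      rw [Set.uIcc_of_le ht.1] at hs
      exact hderiv s hs.1
    have hF0 : XTheta Θ 0 (x, y, z) = (x, y, z) := by
      rw [hF 0, show z ^ 2 + 4 * (0:ℝ) = (-z) ^ 2 by ring, rpow_quarter_sq (-z) hmz,
        Real.sqrt_sq hmz.le, div_mul_cancel₀ _ hsmz.ne', div_mul_cancel₀ _ hsmz.ne', neg_neg]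
    rw [key, hF0]
    abel
  by_cases h3 : x ^ 2 + y ^ 2 ≤ z ∧ 0 < z
  · -- the upper paraboloid case
    have hz := h3.2
    have hsz : (0:ℝ) < Real.sqrt z := Real.sqrt_pos.2 hz
    have hu0 : (0:ℝ) ≤ z ^ 2 / 4 := by positivity
    have hFle : ∀ s : ℝ, s ≤ z ^ 2 / 4 → XTheta Θ s (x, y, z) =
        (x / Real.sqrt z * (z ^ 2 - 4 * s) ^ ((1 : ℝ) / 4),
         y / Real.sqrt z * (z ^ 2 - 4 * s) ^ ((1 : ℝ) / 4),
         Real.sqrt (z ^ 2 - 4 * s)) := fun s hs => by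
      simp only [XTheta]; rw [if_neg h2, if_pos h3, if_pos hs]
    have hFgt : ∀ s : ℝ, z ^ 2 / 4 < s → XTheta Θ s (x, y, z) =
        ((x * Real.cos Θ - y * Real.sin Θ) / Real.sqrt z * (4 * s - z ^ 2) ^ ((1 : ℝ) / 4),
         (x * Real.sin Θ + y * Real.cos Θ) / Real.sqrt z * (4 * s - z ^ 2) ^ ((1 : ℝ) / 4),
         -Real.sqrt (4 * s - z ^ 2)) := fun s hs => by
      simp only [XTheta]; rw [if_neg h2, if_pos h3, if_neg (not_le.2 hs)]
    have hzero : z ^ 2 - 4 * (z ^ 2 / 4) = (0:ℝ) := by ring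
    have hzero' : 4 * (z ^ 2 / 4) - z ^ 2 = (0:ℝ) := by ring
    have hFu : XTheta Θ (z ^ 2 / 4) (x, y, z) = 0 := by
      rw [hFle _ le_rfl, hzero, Real.zero_rpow (by norm_num : (1:ℝ)/4 ≠ 0), Real.sqrt_zero]
      simp
    have hrot : (x * Real.cos Θ - y * Real.sin Θ) ^ 2 + (x * Real.sin Θ + y * Real.cos Θ) ^ 2
        = x ^ 2 + y ^ 2 := by
      have h := Real.sin_sq_add_cos_sq Θ
      nlinarith [h]
    have hbbL : ∀ s : ℝ, s < z ^ 2 / 4 → bb (XTheta Θ s (x, y, z)) =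
        (-(x / Real.sqrt z * (z ^ 2 - 4 * s) ^ (-(3 : ℝ) / 4)),
         -(y / Real.sqrt z * (z ^ 2 - 4 * s) ^ (-(3 : ℝ) / 4)),
         -2 * (z ^ 2 - 4 * s) ^ (-(1 : ℝ) / 2)) := by
      intro s hs
      have hd : (0:ℝ) < z ^ 2 - 4 * s := by linarith
      have hmem := sum_sq_le x y z (z ^ 2 - 4 * s) hz h3.1 hd.le
      rw [hFle s hs.le, bb_of_pos (Real.sqrt_pos.2 hd) hmem]
      have e1 : (Real.sqrt (z ^ 2 - 4 * s)) ^ 2 = z ^ 2 - 4 * s := Real.sq_sqrt hd.le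
      simp only [Prod.mk.injEq]
      exact ⟨by rw [e1, neg_div, quarter_div _ _ hd], by rw [e1, neg_div, quarter_div _ _ hd],
        neg_two_div_sqrt _ hd.le⟩
    have hbbR : ∀ s : ℝ, z ^ 2 / 4 < s → bb (XTheta Θ s (x, y, z)) =
        ((x * Real.cos Θ - y * Real.sin Θ) / Real.sqrt z * (4 * s - z ^ 2) ^ (-(3 : ℝ) / 4),
         (x * Real.sin Θ + y * Real.cos Θ) / Real.sqrt z * (4 * s - z ^ 2) ^ (-(3 : ℝ) / 4),
         -2 * (4 * s - z ^ 2) ^ (-(1 : ℝ) / 2)) := by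
      intro s hs
      have he : (0:ℝ) < 4 * s - z ^ 2 := by linarith
      have hmem : ((x * Real.cos Θ - y * Real.sin Θ) / Real.sqrt z *
            (4 * s - z ^ 2) ^ ((1:ℝ)/4)) ^ 2
          + ((x * Real.sin Θ + y * Real.cos Θ) / Real.sqrt z *
            (4 * s - z ^ 2) ^ ((1:ℝ)/4)) ^ 2
          ≤ -(-Real.sqrt (4 * s - z ^ 2)) := by
        rw [neg_neg]
        exact sum_sq_le _ _ z _ hz (by rw [hrot]; exact h3.1) he.le
      rw [hFgt s hs, bb_of_neg (neg_lt_zero.2 (Real.sqrt_pos.2 he)) hmem]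
      have e1 : (-Real.sqrt (4 * s - z ^ 2)) ^ 2 = 4 * s - z ^ 2 := by
        rw [neg_sq]; exact Real.sq_sqrt he.le
      simp only [Prod.mk.injEq]
      exact ⟨by rw [e1, quarter_div _ _ he], by rw [e1, quarter_div _ _ he],
        two_div_neg_sqrt _ he.le⟩
    have hbbu : bb (XTheta Θ (z ^ 2 / 4) (x, y, z)) = 0 := by
      rw [hFu]; exact bb_zero_z 0 0
    have heqL : ∀ s : ℝ, s ≤ z ^ 2 / 4 → bb (XTheta Θ s (x, y, z)) =
        (-(x / Real.sqrt z * (z ^ 2 - 4 * s) ^ (-(3 : ℝ) / 4)),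
         -(y / Real.sqrt z * (z ^ 2 - 4 * s) ^ (-(3 : ℝ) / 4)),
         -2 * (z ^ 2 - 4 * s) ^ (-(1 : ℝ) / 2)) := by
      intro s hs
      rcases lt_or_eq_of_le hs with h | h
      · exact hbbL s h
      · rw [h, hbbu, hzero, Real.zero_rpow (by norm_num : -(3:ℝ)/4 ≠ 0),
          Real.zero_rpow (by norm_num : -(1:ℝ)/2 ≠ 0)]
        simp
        rfl
    have heqR : ∀ s : ℝ, z ^ 2 / 4 ≤ s → bb (XTheta Θ s (x, y, z)) =
        ((x * Real.cos Θ - y * Real.sin Θ) / Real.sqrt z * (4 * s - z ^ 2) ^ (-(3 : ℝ) / 4),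
         (x * Real.sin Θ + y * Real.cos Θ) / Real.sqrt z * (4 * s - z ^ 2) ^ (-(3 : ℝ) / 4),
         -2 * (4 * s - z ^ 2) ^ (-(1 : ℝ) / 2)) := by
      intro s hs
      rcases eq_or_lt_of_le hs with h | h
      · rw [← h, hbbu, hzero', Real.zero_rpow (by norm_num : -(3:ℝ)/4 ≠ 0),
          Real.zero_rpow (by norm_num : -(1:ℝ)/2 ≠ 0)]
        simp
        rfl
      · exact hbbR s h
    have hGL : ∀ c d : ℝ, c ≤ d → MeasureTheory.IntegrableOn
        (fun s : ℝ => (-(x / Real.sqrt z * (z ^ 2 - 4 * s) ^ (-(3 : ℝ) / 4)),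
          -(y / Real.sqrt z * (z ^ 2 - 4 * s) ^ (-(3 : ℝ) / 4)),
          -2 * (z ^ 2 - 4 * s) ^ (-(1 : ℝ) / 2))) (Set.Icc c d) volume := by
      intro c d hcd
      have hb1 : MeasureTheory.IntegrableOn (fun s : ℝ => (z ^ 2 - 4 * s) ^ (-(3:ℝ)/4))
          (Set.Icc c d) volume := by
        have h := integrableOn_rpow_affine (r := -(3:ℝ)/4) (by norm_num) (z ^ 2) (-4) c d hcd
        simpa [sub_eq_add_neg, neg_mul] using h
      have hb2 : MeasureTheory.IntegrableOn (fun s : ℝ => (z ^ 2 - 4 * s) ^ (-(1:ℝ)/2))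
          (Set.Icc c d) volume := by
        have h := integrableOn_rpow_affine (r := -(1:ℝ)/2) (by norm_num) (z ^ 2) (-4) c d hcd
        simpa [sub_eq_add_neg, neg_mul] using h
      exact ((hb1.const_mul (x / Real.sqrt z)).neg'.prodMk
        ((hb1.const_mul (y / Real.sqrt z)).neg'.prodMk (hb2.const_mul (-2))))
    have hGR : ∀ c d : ℝ, c ≤ d → MeasureTheory.IntegrableOn
        (fun s : ℝ => ((x * Real.cos Θ - y * Real.sin Θ) / Real.sqrt z *
            (4 * s - z ^ 2) ^ (-(3 : ℝ) / 4),
          (x * Real.sin Θ + y * Real.cos Θ) / Real.sqrt z * (4 * s - z ^ 2) ^ (-(3 : ℝ) / 4),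
          -2 * (4 * s - z ^ 2) ^ (-(1 : ℝ) / 2))) (Set.Icc c d) volume := by
      intro c d hcd
      have hb1 : MeasureTheory.IntegrableOn (fun s : ℝ => (4 * s - z ^ 2) ^ (-(3:ℝ)/4))
          (Set.Icc c d) volume := by
        have h := integrableOn_rpow_affine (r := -(3:ℝ)/4) (by norm_num) (-z ^ 2) 4 c d hcd
        simpa [neg_add_eq_sub] using h
      have hb2 : MeasureTheory.IntegrableOn (fun s : ℝ => (4 * s - z ^ 2) ^ (-(1:ℝ)/2))
          (Set.Icc c d) volume := by
        have h := integrableOn_rpow_affine (r := -(1:ℝ)/2) (by norm_num) (-z ^ 2) 4 c d hcd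
        simpa [neg_add_eq_sub] using h
      exact ((hb1.const_mul _).prodMk ((hb1.const_mul _).prodMk (hb2.const_mul (-2))))
    have hint : MeasureTheory.IntegrableOn (fun s => bb (XTheta Θ s (x, y, z)))
        (Set.Icc 0 T) volume := by
      by_cases hTu : T ≤ z ^ 2 / 4
      · exact (hGL 0 T hT.le).congr_fun (fun s hs => (heqL s (le_trans hs.2 hTu)).symm)
          measurableSet_Icc
      · push_neg at hTu
        rw [← Set.Icc_union_Icc_eq_Icc hu0 hTu.le]
        exact ((hGL 0 _ hu0).congr_fun (fun s hs => (heqL s hs.2).symm) measurableSet_Icc).union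
          ((hGR _ T hTu.le).congr_fun (fun s hs => (heqR s hs.1).symm) measurableSet_Icc)
    have hq : Continuous (fun w : ℝ => w ^ ((1:ℝ)/4)) := by
      rw [continuous_iff_continuousAt]
      intro w
      exact Real.continuousAt_rpow_const w _ (Or.inr (by norm_num))
    have hinL : Continuous (fun s : ℝ => z ^ 2 - 4 * s) :=
      continuous_const.sub (continuous_const.mul continuous_id)
    have hinR : Continuous (fun s : ℝ => 4 * s - z ^ 2) :=
      (continuous_const.mul continuous_id).sub continuous_const
    have hcontL : Continuous (fun s : ℝ =>
        (x / Real.sqrt z * (z ^ 2 - 4 * s) ^ ((1 : ℝ) / 4),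
         y / Real.sqrt z * (z ^ 2 - 4 * s) ^ ((1 : ℝ) / 4),
         Real.sqrt (z ^ 2 - 4 * s))) :=
      (continuous_const.mul (hq.comp hinL)).prodMk ((continuous_const.mul (hq.comp hinL)).prodMk
        (Real.continuous_sqrt.comp hinL))
    have hcontR : Continuous (fun s : ℝ =>
        ((x * Real.cos Θ - y * Real.sin Θ) / Real.sqrt z * (4 * s - z ^ 2) ^ ((1 : ℝ) / 4),
         (x * Real.sin Θ + y * Real.cos Θ) / Real.sqrt z * (4 * s - z ^ 2) ^ ((1 : ℝ) / 4),
         -Real.sqrt (4 * s - z ^ 2))) :=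
      (continuous_const.mul (hq.comp hinR)).prodMk ((continuous_const.mul (hq.comp hinR)).prodMk
        ((Real.continuous_sqrt.comp hinR).neg))
    have hdL : ∀ s : ℝ, s < z ^ 2 / 4 →
        HasDerivAt (fun r => XTheta Θ r (x, y, z)) (bb (XTheta Θ s (x, y, z))) s := by
      intro s hs
      have hd : (0:ℝ) < z ^ 2 - 4 * s := by linarith
      rw [hbbL s hs]
      have hev : (fun r => XTheta Θ r (x, y, z)) =ᶠ[nhds s] (fun r =>
          (x / Real.sqrt z * (z ^ 2 - 4 * r) ^ ((1 : ℝ) / 4),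
           y / Real.sqrt z * (z ^ 2 - 4 * r) ^ ((1 : ℝ) / 4),
           Real.sqrt (z ^ 2 - 4 * r))) :=
        Filter.eventuallyEq_of_mem (Iio_mem_nhds hs) (fun r hr => hFle r (le_of_lt hr))
      have h1 : HasDerivAt (fun r : ℝ => x / Real.sqrt z * (z ^ 2 - 4 * r) ^ ((1:ℝ)/4))
          (-(x / Real.sqrt z * (z ^ 2 - 4 * s) ^ (-(3:ℝ)/4))) s := by
        have h := (hd_rpow ((1:ℝ)/4) (hd_in2 z s) hd.ne').const_mul (x / Real.sqrt z)
        refine h.congr_deriv ?_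
        rw [show (1:ℝ)/4 - 1 = -(3:ℝ)/4 by norm_num]
        ring
      have h2' : HasDerivAt (fun r : ℝ => y / Real.sqrt z * (z ^ 2 - 4 * r) ^ ((1:ℝ)/4))
          (-(y / Real.sqrt z * (z ^ 2 - 4 * s) ^ (-(3:ℝ)/4))) s := by
        have h := (hd_rpow ((1:ℝ)/4) (hd_in2 z s) hd.ne').const_mul (y / Real.sqrt z)
        refine h.congr_deriv ?_
        rw [show (1:ℝ)/4 - 1 = -(3:ℝ)/4 by norm_num]
        ring
      have h3 : HasDerivAt (fun r : ℝ => Real.sqrt (z ^ 2 - 4 * r))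
          (-2 * (z ^ 2 - 4 * s) ^ (-(1:ℝ)/2)) s := by
        have h := hd_sqrt (hd_in2 z s) hd.ne'
        refine h.congr_deriv ?_
        rw [neg_two_rpow_half_eq _ hd]
        have h0 : Real.sqrt (z ^ 2 - 4 * s) ≠ 0 := (Real.sqrt_pos.2 hd).ne'
        field_simp
        ring
      exact (h1.prodMk (h2'.prodMk h3)).congr_of_eventuallyEq hev
    have hdR : ∀ s : ℝ, z ^ 2 / 4 < s →
        HasDerivAt (fun r => XTheta Θ r (x, y, z)) (bb (XTheta Θ s (x, y, z))) s := by
      intro s hs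
      have he : (0:ℝ) < 4 * s - z ^ 2 := by linarith
      rw [hbbR s hs]
      have hev : (fun r => XTheta Θ r (x, y, z)) =ᶠ[nhds s] (fun r =>
          ((x * Real.cos Θ - y * Real.sin Θ) / Real.sqrt z * (4 * r - z ^ 2) ^ ((1 : ℝ) / 4),
           (x * Real.sin Θ + y * Real.cos Θ) / Real.sqrt z * (4 * r - z ^ 2) ^ ((1 : ℝ) / 4),
           -Real.sqrt (4 * r - z ^ 2))) :=
        Filter.eventuallyEq_of_mem (Ioi_mem_nhds hs) (fun r hr => hFgt r hr)
      have h1 : HasDerivAt (fun r : ℝ => (x * Real.cos Θ - y * Real.sin Θ) / Real.sqrt z *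
            (4 * r - z ^ 2) ^ ((1:ℝ)/4))
          ((x * Real.cos Θ - y * Real.sin Θ) / Real.sqrt z * (4 * s - z ^ 2) ^ (-(3:ℝ)/4)) s := by
        have h := (hd_rpow ((1:ℝ)/4) (hd_in3 z s) he.ne').const_mul
          ((x * Real.cos Θ - y * Real.sin Θ) / Real.sqrt z)
        refine h.congr_deriv ?_
        rw [show (1:ℝ)/4 - 1 = -(3:ℝ)/4 by norm_num]
        ring
      have h2' : HasDerivAt (fun r : ℝ => (x * Real.sin Θ + y * Real.cos Θ) / Real.sqrt z *
            (4 * r - z ^ 2) ^ ((1:ℝ)/4))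
          ((x * Real.sin Θ + y * Real.cos Θ) / Real.sqrt z * (4 * s - z ^ 2) ^ (-(3:ℝ)/4)) s := by
        have h := (hd_rpow ((1:ℝ)/4) (hd_in3 z s) he.ne').const_mul
          ((x * Real.sin Θ + y * Real.cos Θ) / Real.sqrt z)
        refine h.congr_deriv ?_
        rw [show (1:ℝ)/4 - 1 = -(3:ℝ)/4 by norm_num]
        ring
      have h3 : HasDerivAt (fun r : ℝ => -Real.sqrt (4 * r - z ^ 2))
          (-2 * (4 * s - z ^ 2) ^ (-(1:ℝ)/2)) s := by
        have h := (hd_sqrt (hd_in3 z s) he.ne').neg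
        refine h.congr_deriv ?_
        rw [neg_two_rpow_half_eq _ he]
        have h0 : Real.sqrt (4 * s - z ^ 2) ≠ 0 := (Real.sqrt_pos.2 he).ne'
        field_simp
        ring
      exact (h1.prodMk (h2'.prodMk h3)).congr_of_eventuallyEq hev
    have hF0 : XTheta Θ 0 (x, y, z) = (x, y, z) := by
      rw [hFle 0 hu0, show z ^ 2 - 4 * (0:ℝ) = z ^ 2 by ring, rpow_quarter_sq z hz,
        Real.sqrt_sq hz.le, div_mul_cancel₀ _ hsz.ne', div_mul_cancel₀ _ hsz.ne']
    refine ⟨hint, fun t ht => ?_⟩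
    rcases le_or_gt t (z ^ 2 / 4) with htu | htu
    · have key : ∫ s in (0:ℝ)..t, bb (XTheta Θ s (x, y, z)) =
          XTheta Θ t (x, y, z) - XTheta Θ 0 (x, y, z) := by
        refine intervalIntegral.integral_eq_sub_of_hasDeriv_right_of_le
          (f := fun r => XTheta Θ r (x, y, z)) ht.1 ?_ ?_ ?_
        · exact (hcontL.continuousOn).congr (fun r hr => hFle r (le_trans hr.2 htu))
        · intro r hr
          exact (hdL r (lt_of_lt_of_le hr.2 htu)).hasDerivWithinAt
        · exact (intervalIntegrable_iff_integrableOn_Icc_of_le ht.1).2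
            (hint.mono_set (Set.Icc_subset_Icc le_rfl ht.2))
      rw [key, hF0]
      abel
    · have huT : z ^ 2 / 4 ≤ T := le_trans htu.le ht.2
      have i1 : IntervalIntegrable (fun s => bb (XTheta Θ s (x, y, z))) volume 0 (z ^ 2 / 4) :=
        (intervalIntegrable_iff_integrableOn_Icc_of_le hu0).2
          (hint.mono_set (Set.Icc_subset_Icc le_rfl huT))
      have i2 : IntervalIntegrable (fun s => bb (XTheta Θ s (x, y, z))) volume (z ^ 2 / 4) t :=
        (intervalIntegrable_iff_integrableOn_Icc_of_le htu.le).2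
          (hint.mono_set (Set.Icc_subset_Icc hu0 ht.2))
      have key1 : ∫ s in (0:ℝ)..(z ^ 2 / 4), bb (XTheta Θ s (x, y, z)) =
          XTheta Θ (z ^ 2 / 4) (x, y, z) - XTheta Θ 0 (x, y, z) := by
        refine intervalIntegral.integral_eq_sub_of_hasDeriv_right_of_le
          (f := fun r => XTheta Θ r (x, y, z)) hu0 ?_ ?_ i1
        · exact (hcontL.continuousOn).congr (fun r hr => hFle r hr.2)
        · intro r hr; exact (hdL r hr.2).hasDerivWithinAt
      have hR0 : ((x * Real.cos Θ - y * Real.sin Θ) / Real.sqrt z *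
            (4 * (z ^ 2 / 4) - z ^ 2) ^ ((1 : ℝ) / 4),
          (x * Real.sin Θ + y * Real.cos Θ) / Real.sqrt z *
            (4 * (z ^ 2 / 4) - z ^ 2) ^ ((1 : ℝ) / 4),
          -Real.sqrt (4 * (z ^ 2 / 4) - z ^ 2)) = (0 : ℝ × ℝ × ℝ) := by
        rw [hzero', Real.zero_rpow (by norm_num : (1:ℝ)/4 ≠ 0), Real.sqrt_zero]
        simp
      have key2 : ∫ s in (z ^ 2 / 4)..t, bb (XTheta Θ s (x, y, z)) =
          XTheta Θ t (x, y, z) - XTheta Θ (z ^ 2 / 4) (x, y, z) := by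
        refine intervalIntegral.integral_eq_sub_of_hasDeriv_right_of_le
          (f := fun r => XTheta Θ r (x, y, z)) htu.le ?_ ?_ i2
        · refine (hcontR.continuousOn).congr ?_
          intro r hr
          show XTheta Θ r (x, y, z) = _
          rcases eq_or_lt_of_le hr.1 with he | hlt
          · rw [← he, hFu]
            exact hR0.symm
          · exact hFgt r hlt
        · intro r hr; exact (hdR r hr.1).hasDerivWithinAt
      rw [← intervalIntegral.integral_add_adjacent_intervals i1 i2, key1, key2, hFu, hF0]
      abel
  · -- outside the paraboloids
    have hF : ∀ s : ℝ, XTheta Θ s (x, y, z) = (x, y, z) := fun s => by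
      simp only [XTheta]; rw [if_neg h2, if_neg h3]
    have hb : bb (x, y, z) = 0 := by
      have hnc : ¬((x, y, z) ∈ PP ∧ (x, y, z).2.2 ≠ 0) := by
        rintro ⟨hPP, hzne⟩
        rcases hPP with hP | hM
        · have hP' : x ^ 2 + y ^ 2 ≤ z := hP
          have h0 : (0:ℝ) ≤ z := le_trans (by positivity) hP'
          exact h3 ⟨hP', lt_of_le_of_ne h0 (Ne.symm hzne)⟩
        · have hM' : x ^ 2 + y ^ 2 ≤ -z := hM
          have h0 : (0:ℝ) ≤ -z := le_trans (by positivity) hM'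
          exact h2 ⟨hM', lt_of_le_of_ne (by linarith) hzne⟩
      simp only [bb, if_neg hnc]
      rfl
    constructor
    · simp only [hF, hb]
      exact MeasureTheory.integrableOn_zero
    · intro t ht
      simp only [hF, hb, intervalIntegral.integral_zero, add_zero]

end
end

section
/- The vector field b admits infinitely many distinct regular Lagrangian flows: for any Θ, Φ ∈ (0,2π] with Θ ≠ Φ and any t > 0, the set { 𝐱 ∈ ℝ³ \ {0} : X^Θ(t,𝐱) ≠ X^Φ(t,𝐱) } has positive Lebesgue measure (it contains, up to a null set, the set of points (x,y,z) ∈ P⁺ with 0 < z² < 4t and (x,y) ≠ (0,0)). -/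
open MeasureTheory Real Set Filter Topology
open scoped ENNReal

noncomputable section

/-!
Points of `P⁺` with `z² < 4t` have already passed through the origin at time `t`, and
`X^Θ(t, ·)` sends them to the point of `P⁻` reached by the lower flow, rotated by `Θ` in the
`xy`-plane. A rotation by `Θ` and one by `Φ` agree on a vector `(x, y) ≠ 0` only when
`cos Θ = cos Φ` and `sin Θ = sin Φ`, which forces `Θ = Φ` on `(0, 2π]`. Hence the two flows
differ on the open, nonempty set `{0 < x, x² + y² < z, z² < 4t}`, which has positive measure.
-/

theorem cos_eq_cos_and_sin_eq_sin_of_rotate_eq {x y θ φ : ℝ} (hxy : x ^ 2 + y ^ 2 ≠ 0)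
    (h₁ : x * cos θ - y * sin θ = x * cos φ - y * sin φ)
    (h₂ : x * sin θ + y * cos θ = x * sin φ + y * cos φ) :
    cos θ = cos φ ∧ sin θ = sin φ := by
  set a := cos θ - cos φ
  set b := sin θ - sin φ
  have key : (x ^ 2 + y ^ 2) * (a ^ 2 + b ^ 2) = 0 := by
    linear_combination (x * a - y * b) * h₁ + (x * b + y * a) * h₂
  obtain ⟨ha, hb⟩ := (add_eq_zero_iff_of_nonneg (sq_nonneg a) (sq_nonneg b)).1
    ((mul_eq_zero.1 key).resolve_left hxy)
  exact ⟨sub_eq_zero.1 (pow_eq_zero_iff two_ne_zero |>.1 ha),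
    sub_eq_zero.1 (pow_eq_zero_iff two_ne_zero |>.1 hb)⟩

theorem eq_of_cos_eq_cos_of_sin_eq_sin {θ φ : ℝ} (h : |θ - φ| < 2 * π)
    (hc : cos θ = cos φ) (hs : sin θ = sin φ) : θ = φ := by
  have hcos : cos (θ - φ) = 1 := by
    rw [cos_sub, hc, hs, ← sq, ← sq, cos_sq_add_sin_sq]
  obtain ⟨hlo, hhi⟩ := abs_lt.1 h
  exact sub_eq_zero.1 ((cos_eq_one_iff_of_lt_of_lt hlo hhi).1 hcos)

theorem XTheta_of_mem_Pplus_of_sq_lt (Θ : ℝ) {t x y z : ℝ} (hP : x ^ 2 + y ^ 2 ≤ z)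
    (hz : 0 < z) (hzt : z ^ 2 < 4 * t) :
    XTheta Θ t (x, y, z) =
      ((x * cos Θ - y * sin Θ) / √z * (4 * t - z ^ 2) ^ ((1 : ℝ) / 4),
       (x * sin Θ + y * cos Θ) / √z * (4 * t - z ^ 2) ^ ((1 : ℝ) / 4),
       -√(4 * t - z ^ 2)) := by
  have hnot : ¬ (x ^ 2 + y ^ 2 ≤ -z ∧ z < 0) := fun h => h.2.not_gt hz
  have hlate : ¬ t ≤ z ^ 2 / 4 := by linarith
  simp only [XTheta, if_neg hnot, if_pos (And.intro hP hz), if_neg hlate]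

theorem XTheta_ne_XTheta_of_mem_Pplus {Θ Φ t x y z : ℝ} (hΘΦ : |Θ - Φ| < 2 * π) (hne : Θ ≠ Φ)
    (hP : x ^ 2 + y ^ 2 ≤ z) (hz : 0 < z) (hzt : z ^ 2 < 4 * t) (hxy : x ^ 2 + y ^ 2 ≠ 0) :
    XTheta Θ t (x, y, z) ≠ XTheta Φ t (x, y, z) := by
  intro h
  rw [XTheta_of_mem_Pplus_of_sq_lt Θ hP hz hzt, XTheta_of_mem_Pplus_of_sq_lt Φ hP hz hzt,
    Prod.mk.injEq, Prod.mk.injEq] at h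
  obtain ⟨h₁, h₂, -⟩ := h
  have hw : (4 * t - z ^ 2) ^ ((1 : ℝ) / 4) ≠ 0 := (rpow_pos_of_pos (by linarith) _).ne'
  have hs : √z ≠ 0 := (sqrt_pos.2 hz).ne'
  have h₁' := (div_left_inj' hs).1 (mul_right_cancel₀ hw h₁)
  have h₂' := (div_left_inj' hs).1 (mul_right_cancel₀ hw h₂)
  obtain ⟨hcos, hsin⟩ := cos_eq_cos_and_sin_eq_sin_of_rotate_eq hxy h₁' h₂'
  exact hne (eq_of_cos_eq_cos_of_sin_eq_sin hΘΦ hcos hsin)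

/-- The vector field `b` admits infinitely many distinct regular Lagrangian flows:
for `Θ ≠ Φ` in `(0,2π]` and any `t > 0`, the set of nonzero points where
`X^Θ(t,·)` and `X^Φ(t,·)` disagree has positive Lebesgue measure. -/
theorem XTheta_nonuniqueness (Θ Φ : ℝ) (hΘ : Θ ∈ Set.Ioc 0 (2 * Real.pi))
    (hΦ : Φ ∈ Set.Ioc 0 (2 * Real.pi)) (hne : Θ ≠ Φ) (t : ℝ) (ht : 0 < t) :
    0 < volume {p : ℝ × ℝ × ℝ | p ≠ 0 ∧ XTheta Θ t p ≠ XTheta Φ t p} := by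
  have hΘΦ : |Θ - Φ| < 2 * π :=
    abs_sub_lt_iff.2 ⟨by linarith [hΘ.2, hΦ.1], by linarith [hΘ.1, hΦ.2]⟩
  let U : Set (ℝ × ℝ × ℝ) := {p | 0 < p.1 ∧ p.1 ^ 2 + p.2.1 ^ 2 < p.2.2 ∧ p.2.2 ^ 2 < 4 * t}
  have hU_open : IsOpen U :=
    (isOpen_lt continuous_const continuous_fst).inter
      ((isOpen_lt (f := fun p : ℝ × ℝ × ℝ => p.1 ^ 2 + p.2.1 ^ 2) (by fun_prop)
        (by fun_prop)).inter
        (isOpen_lt (f := fun p : ℝ × ℝ × ℝ => p.2.2 ^ 2) (by fun_prop) continuous_const))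
  have hU_nonempty : U.Nonempty := by
    have hs : 0 < min 1 t := lt_min one_pos ht
    have hs1 : min 1 t ≤ 1 := min_le_left 1 t
    have hst : min 1 t ≤ t := min_le_right 1 t
    refine ⟨(min 1 t / 2, 0, min 1 t), ?_, ?_, ?_⟩ <;> dsimp only <;> nlinarith
  have hU_sub : U ⊆ {p | p ≠ 0 ∧ XTheta Θ t p ≠ XTheta Φ t p} := by
    rintro ⟨x, y, z⟩ ⟨hx, hP, hzt⟩
    have hz : 0 < z := (by positivity : (0 : ℝ) ≤ x ^ 2 + y ^ 2).trans_lt hP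
    refine ⟨fun h => hz.ne' (congrArg (fun p : ℝ × ℝ × ℝ => p.2.2) h), ?_⟩
    exact XTheta_ne_XTheta_of_mem_Pplus hΘΦ hne hP.le hz hzt (by positivity)
  exact (hU_open.measure_pos volume hU_nonempty).trans_le (measure_mono hU_sub)

end
end

section
/- For every Θ ∈ (0,2π] and every t ≥ 0, the map Y^Θ(t,·) defined by the explicit formulas below is a two-sided inverse of X^Θ(t,·) outside a Lebesgue-null set: for almost every 𝐱 ∈ ℝ³, X^Θ(t, Y^Θ(t,𝐱)) = 𝐱 and Y^Θ(t, X^Θ(t,𝐱)) = 𝐱. Here Y^Θ(t,(x,y,z)) = ( (x/√z)·(z²+4t)^{1/4}, (y/√z)·(z²+4t)^{1/4}, √(z²+4t) ) if (x,y,z) ∈ P⁺; Y^Θ(t,(x,y,z)) = ( (x/√(−z))·(z²−4t)^{1/4}, (y/√(−z))·(z²−4t)^{1/4}, −√(z²−4t) ) if (x,y,z) ∈ P⁻ and 0 ≤ t ≤ z²/4; Y^Θ(t,(x,y,z)) = ( ((x cosΘ + y sinΘ)/√(−z))·(4t−z²)^{1/4}, ((−x sinΘ + y cosΘ)/√(−z))·(4t−z²)^{1/4},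 √(4t−z²) ) if (x,y,z) ∈ P⁻ and t ≥ z²/4; and Y^Θ(t,(x,y,z)) = (x,y,z) if (x,y,z) ∉ P. -/
open MeasureTheory Real Set Filter Topology
open scoped ENNReal

noncomputable section

open scoped Classical in
/-- The explicit a.e. inverse `Y^Θ(t,·)` of the flow `X^Θ(t,·)`. -/
def YTheta (Θ : ℝ) (t : ℝ) (p : ℝ × ℝ × ℝ) : ℝ × ℝ × ℝ :=
  let x := p.1; let y := p.2.1; let z := p.2.2
  if x ^ 2 + y ^ 2 ≤ z ∧ 0 < z then
    (x / Real.sqrt z * (z ^ 2 + 4 * t) ^ ((1 : ℝ) / 4),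
     y / Real.sqrt z * (z ^ 2 + 4 * t) ^ ((1 : ℝ) / 4),
     Real.sqrt (z ^ 2 + 4 * t))
  else if x ^ 2 + y ^ 2 ≤ -z ∧ z < 0 then
    if t ≤ z ^ 2 / 4 then
      (x / Real.sqrt (-z) * (z ^ 2 - 4 * t) ^ ((1 : ℝ) / 4),
       y / Real.sqrt (-z) * (z ^ 2 - 4 * t) ^ ((1 : ℝ) / 4),
       -Real.sqrt (z ^ 2 - 4 * t))
    else
      ((x * Real.cos Θ + y * Real.sin Θ) / Real.sqrt (-z) * (4 * t - z ^ 2) ^ ((1 : ℝ) / 4),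
       (-x * Real.sin Θ + y * Real.cos Θ) / Real.sqrt (-z) * (4 * t - z ^ 2) ^ ((1 : ℝ) / 4),
       Real.sqrt (4 * t - z ^ 2))
  else p

section Helpers

lemma q4 (A : ℝ) (hA : 0 ≤ A) : Real.sqrt (Real.sqrt A) = A ^ ((1:ℝ)/4) := by
  rw [show (1:ℝ)/4 = 1/2*((1:ℝ)/2) by norm_num, Real.rpow_mul hA, ← Real.sqrt_eq_rpow,
    ← Real.sqrt_eq_rpow]

lemma sq4 (w : ℝ) (hw : 0 ≤ w) : (w^2) ^ ((1:ℝ)/4) = Real.sqrt w := by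
  rw [← q4 _ (sq_nonneg w), Real.sqrt_sq hw]


lemma sq4' (z : ℝ) (hz : z ≤ 0) : (z^2) ^ ((1:ℝ)/4) = Real.sqrt (-z) := by
  rw [show z^2 = (-z)^2 from by ring, sq4 (-z) (by linarith)]

lemma sqrt_sq' (z : ℝ) (hz : z ≤ 0) : Real.sqrt (z^2) = -z := by
  rw [Real.sqrt_sq_eq_abs, abs_of_nonpos hz]

lemma pow4sq (A : ℝ) (hA : 0 ≤ A) : (A ^ ((1:ℝ)/4))^2 = Real.sqrt A := by
  rw [← q4 A hA, Real.sq_sqrt (Real.sqrt_nonneg A)]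

lemma key (x w A : ℝ) (hw : 0 < w) (hA : 0 < A) :
    x / Real.sqrt w * A ^ ((1:ℝ)/4) / A ^ ((1:ℝ)/4) * Real.sqrt w = x := by
  have h1 : Real.sqrt w ≠ 0 := ne_of_gt (Real.sqrt_pos.2 hw)
  have h2 : A ^ ((1:ℝ)/4) ≠ 0 := ne_of_gt (Real.rpow_pos_of_pos hA _)
  field_simp

lemma sos (x y w A : ℝ) (hw : 0 < w) (hA : 0 ≤ A) (hxy : x^2 + y^2 ≤ w) :
    (x / Real.sqrt w * A ^ ((1:ℝ)/4))^2 + (y / Real.sqrt w * A ^ ((1:ℝ)/4))^2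
      ≤ Real.sqrt A := by
  have h : (x / Real.sqrt w * A ^ ((1:ℝ)/4))^2 + (y / Real.sqrt w * A ^ ((1:ℝ)/4))^2
      = (x^2+y^2)/w * Real.sqrt A := by
    rw [mul_pow, mul_pow, pow4sq A hA, div_pow, div_pow, Real.sq_sqrt hw.le]; ring
  rw [h]
  have h1 : (x^2+y^2)/w ≤ 1 := (div_le_one hw).2 hxy
  have h2 : 0 ≤ (x^2+y^2)/w := div_nonneg (by positivity) hw.le
  nlinarith [Real.sqrt_nonneg A]

lemma XTheta_neg (Θ t x y z : ℝ) (h : x ^ 2 + y ^ 2 ≤ -z ∧ z < 0) :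
    XTheta Θ t (x, y, z) =
      (x / Real.sqrt (-z) * (z ^ 2 + 4 * t) ^ ((1 : ℝ) / 4),
       y / Real.sqrt (-z) * (z ^ 2 + 4 * t) ^ ((1 : ℝ) / 4),
       -Real.sqrt (z ^ 2 + 4 * t)) := by
  simp only [XTheta]; rw [if_pos h]

lemma XTheta_pos_early (Θ t x y z : ℝ) (h : x ^ 2 + y ^ 2 ≤ z ∧ 0 < z) (h2 : t ≤ z ^ 2 / 4) :
    XTheta Θ t (x, y, z) =
      (x / Real.sqrt z * (z ^ 2 - 4 * t) ^ ((1 : ℝ) / 4),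
       y / Real.sqrt z * (z ^ 2 - 4 * t) ^ ((1 : ℝ) / 4),
       Real.sqrt (z ^ 2 - 4 * t)) := by
  simp only [XTheta]
  rw [if_neg (by rintro ⟨-, hlt⟩; exact absurd h.2 (lt_asymm hlt)), if_pos h, if_pos h2]

lemma XTheta_pos_late (Θ t x y z : ℝ) (h : x ^ 2 + y ^ 2 ≤ z ∧ 0 < z) (h2 : ¬ t ≤ z ^ 2 / 4) :
    XTheta Θ t (x, y, z) =
      ((x * Real.cos Θ - y * Real.sin Θ) / Real.sqrt z * (4 * t - z ^ 2) ^ ((1 : ℝ) / 4),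
       (x * Real.sin Θ + y * Real.cos Θ) / Real.sqrt z * (4 * t - z ^ 2) ^ ((1 : ℝ) / 4),
       -Real.sqrt (4 * t - z ^ 2)) := by
  simp only [XTheta]
  rw [if_neg (by rintro ⟨-, hlt⟩; exact absurd h.2 (lt_asymm hlt)), if_pos h, if_neg h2]

lemma XTheta_id (Θ t x y z : ℝ) (h1 : ¬(x ^ 2 + y ^ 2 ≤ -z ∧ z < 0))
    (h2 : ¬(x ^ 2 + y ^ 2 ≤ z ∧ 0 < z)) : XTheta Θ t (x, y, z) = (x, y, z) := by
  simp only [XTheta]; rw [if_neg h1, if_neg h2]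

lemma YTheta_pos (Θ t x y z : ℝ) (h : x ^ 2 + y ^ 2 ≤ z ∧ 0 < z) :
    YTheta Θ t (x, y, z) =
      (x / Real.sqrt z * (z ^ 2 + 4 * t) ^ ((1 : ℝ) / 4),
       y / Real.sqrt z * (z ^ 2 + 4 * t) ^ ((1 : ℝ) / 4),
       Real.sqrt (z ^ 2 + 4 * t)) := by
  simp only [YTheta]; rw [if_pos h]

lemma YTheta_neg_early (Θ t x y z : ℝ) (h : x ^ 2 + y ^ 2 ≤ -z ∧ z < 0) (h2 : t ≤ z ^ 2 / 4) :
    YTheta Θ t (x, y, z) =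
      (x / Real.sqrt (-z) * (z ^ 2 - 4 * t) ^ ((1 : ℝ) / 4),
       y / Real.sqrt (-z) * (z ^ 2 - 4 * t) ^ ((1 : ℝ) / 4),
       -Real.sqrt (z ^ 2 - 4 * t)) := by
  simp only [YTheta]
  rw [if_neg (by rintro ⟨-, hlt⟩; exact absurd h.2 (lt_asymm hlt)), if_pos h, if_pos h2]

lemma YTheta_neg_late (Θ t x y z : ℝ) (h : x ^ 2 + y ^ 2 ≤ -z ∧ z < 0) (h2 : ¬ t ≤ z ^ 2 / 4) :
    YTheta Θ t (x, y, z) =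
      ((x * Real.cos Θ + y * Real.sin Θ) / Real.sqrt (-z) * (4 * t - z ^ 2) ^ ((1 : ℝ) / 4),
       (-x * Real.sin Θ + y * Real.cos Θ) / Real.sqrt (-z) * (4 * t - z ^ 2) ^ ((1 : ℝ) / 4),
       Real.sqrt (4 * t - z ^ 2)) := by
  simp only [YTheta]
  rw [if_neg (by rintro ⟨-, hlt⟩; exact absurd h.2 (lt_asymm hlt)), if_pos h, if_neg h2]

lemma YTheta_id (Θ t x y z : ℝ) (h1 : ¬(x ^ 2 + y ^ 2 ≤ z ∧ 0 < z))
    (h2 : ¬(x ^ 2 + y ^ 2 ≤ -z ∧ z < 0)) : YTheta Θ t (x, y, z) = (x, y, z) := by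
  simp only [YTheta]; rw [if_neg h1, if_neg h2]

end Helpers
/-- For every `Θ ∈ (0,2π]` and `t ≥ 0`, the map `Y^Θ(t,·)` is a two-sided inverse of
`X^Θ(t,·)` outside a Lebesgue-null set: for a.e. `𝐱 ∈ ℝ³`,
`X^Θ(t, Y^Θ(t,𝐱)) = 𝐱` and `Y^Θ(t, X^Θ(t,𝐱)) = 𝐱`. -/
theorem YTheta_ae_inverse (Θ : ℝ) (hΘ : Θ ∈ Set.Ioc 0 (2 * Real.pi)) (t : ℝ) (ht : 0 ≤ t) :
    ∀ᵐ p : ℝ × ℝ × ℝ ∂volume,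
      XTheta Θ t (YTheta Θ t p) = p ∧ YTheta Θ t (XTheta Θ t p) = p := by
  have plane_null : ∀ c : ℝ, volume {p : ℝ × ℝ × ℝ | p.2.2 = c} = 0 := by
    intro c
    have h : {p : ℝ × ℝ × ℝ | p.2.2 = c}
        = (Set.univ : Set ℝ) ×ˢ ((Set.univ : Set ℝ) ×ˢ ({c} : Set ℝ)) := by
      ext ⟨a, b, d⟩; simp [eq_comm]
    rw [h, Measure.volume_eq_prod, Measure.prod_prod, Measure.volume_eq_prod, Measure.prod_prod]
    simp
  have h1 : ∀ᵐ p : ℝ × ℝ × ℝ ∂volume, ¬ p.2.2 = 2 * Real.sqrt t := by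
    rw [ae_iff]; simpa only [not_not] using plane_null (2 * Real.sqrt t)
  have h2 : ∀ᵐ p : ℝ × ℝ × ℝ ∂volume, ¬ p.2.2 = -(2 * Real.sqrt t) := by
    rw [ae_iff]; simpa only [not_not] using plane_null (-(2 * Real.sqrt t))
  filter_upwards [h1, h2] with p hp1 hp2
  obtain ⟨x, y, z⟩ := p
  simp only at hp1 hp2
  have hsint := Real.sin_sq_add_cos_sq Θ
  by_cases hPp : x ^ 2 + y ^ 2 ≤ z ∧ 0 < z
  · -- upper paraboloid
    have hz : 0 < z := hPp.2
    have hsz : Real.sqrt z ≠ 0 := ne_of_gt (Real.sqrt_pos.2 hz)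
    constructor
    · -- X ∘ Y
      have hA : (0:ℝ) < z ^ 2 + 4 * t := by nlinarith
      rw [YTheta_pos Θ t x y z hPp]
      rw [XTheta_pos_early Θ t _ _ _
        ⟨sos x y z (z ^ 2 + 4 * t) hz hA.le hPp.1, Real.sqrt_pos.2 hA⟩
        (by rw [Real.sq_sqrt hA.le]; nlinarith [sq_nonneg z])]
      rw [Real.sq_sqrt hA.le, show z ^ 2 + 4 * t - 4 * t = z ^ 2 from by ring,
        q4 _ hA.le, sq4 z hz.le, Real.sqrt_sq hz.le]
      exact Prod.ext (key x z _ hz hA) (Prod.ext (key y z _ hz hA) rfl)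
    · -- Y ∘ X
      by_cases htz : t ≤ z ^ 2 / 4
      · have htlt : t < z ^ 2 / 4 := by
          rcases lt_or_eq_of_le htz with h | h
          · exact h
          · exfalso; apply hp1
            have hs : Real.sqrt t = z / 2 := by
              rw [h, show z ^ 2 / 4 = (z / 2) ^ 2 from by ring, Real.sqrt_sq (by linarith)]
            rw [hs]; ring
        have hB : (0:ℝ) < z ^ 2 - 4 * t := by linarith
        rw [XTheta_pos_early Θ t x y z hPp htz]
        rw [YTheta_pos Θ t _ _ _
          ⟨sos x y z (z ^ 2 - 4 * t) hz hB.le hPp.1, Real.sqrt_pos.2 hB⟩]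
        rw [Real.sq_sqrt hB.le, show z ^ 2 - 4 * t + 4 * t = z ^ 2 from by ring,
          q4 _ hB.le, sq4 z hz.le, Real.sqrt_sq hz.le]
        exact Prod.ext (key x z _ hz hB) (Prod.ext (key y z _ hz hB) rfl)
      · have hB : (0:ℝ) < 4 * t - z ^ 2 := by push_neg at htz; linarith
        have hrB : (4 * t - z ^ 2) ^ ((1:ℝ)/4) ≠ 0 := ne_of_gt (Real.rpow_pos_of_pos hB _)
        have hsos : (x * Real.cos Θ - y * Real.sin Θ) ^ 2
            + (x * Real.sin Θ + y * Real.cos Θ) ^ 2 ≤ z := by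
          have : (x * Real.cos Θ - y * Real.sin Θ) ^ 2
              + (x * Real.sin Θ + y * Real.cos Θ) ^ 2 = x ^ 2 + y ^ 2 := by
            linear_combination (x ^ 2 + y ^ 2) * hsint
          rw [this]; exact hPp.1
        rw [XTheta_pos_late Θ t x y z hPp htz]
        rw [YTheta_neg_late Θ t _ _ _
          ⟨by rw [neg_neg]
              exact sos _ _ z (4 * t - z ^ 2) hz hB.le hsos,
           neg_lt_zero.2 (Real.sqrt_pos.2 hB)⟩
          (by rw [neg_sq, Real.sq_sqrt hB.le]; intro h; nlinarith)]
        rw [neg_neg, neg_sq, Real.sq_sqrt hB.le,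
          show 4 * t - (4 * t - z ^ 2) = z ^ 2 from by ring,
          q4 _ hB.le, sq4 z hz.le, Real.sqrt_sq hz.le]
        refine Prod.ext ?_ (Prod.ext ?_ rfl)
        · have hn : (x * Real.cos Θ - y * Real.sin Θ) / Real.sqrt z
                * (4 * t - z ^ 2) ^ ((1:ℝ)/4) * Real.cos Θ
              + (x * Real.sin Θ + y * Real.cos Θ) / Real.sqrt z
                * (4 * t - z ^ 2) ^ ((1:ℝ)/4) * Real.sin Θ
              = x / Real.sqrt z * (4 * t - z ^ 2) ^ ((1:ℝ)/4) := by
            linear_combination x * (4 * t - z ^ 2) ^ ((1:ℝ)/4) / Real.sqrt z * hsint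
          rw [hn]; exact key x z _ hz hB
        · have hn : -((x * Real.cos Θ - y * Real.sin Θ) / Real.sqrt z
                * (4 * t - z ^ 2) ^ ((1:ℝ)/4)) * Real.sin Θ
              + (x * Real.sin Θ + y * Real.cos Θ) / Real.sqrt z
                * (4 * t - z ^ 2) ^ ((1:ℝ)/4) * Real.cos Θ
              = y / Real.sqrt z * (4 * t - z ^ 2) ^ ((1:ℝ)/4) := by
            linear_combination y * (4 * t - z ^ 2) ^ ((1:ℝ)/4) / Real.sqrt z * hsint
          rw [hn]; exact key y z _ hz hB
  · by_cases hPm : x ^ 2 + y ^ 2 ≤ -z ∧ z < 0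
    · -- lower paraboloid
      have hz : z < 0 := hPm.2
      have hw : (0:ℝ) < -z := by linarith
      have hsw : Real.sqrt (-z) ≠ 0 := ne_of_gt (Real.sqrt_pos.2 hw)
      constructor
      · -- X ∘ Y
        by_cases htz : t ≤ z ^ 2 / 4
        · have htlt : t < z ^ 2 / 4 := by
            rcases lt_or_eq_of_le htz with h | h
            · exact h
            · exfalso; apply hp2
              have hs : Real.sqrt t = -z / 2 := by
                rw [h, show z ^ 2 / 4 = (-z / 2) ^ 2 from by ring,
                  Real.sqrt_sq (by linarith)]
              rw [hs]; ring
          have hB : (0:ℝ) < z ^ 2 - 4 * t := by linarith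
          rw [YTheta_neg_early Θ t x y z hPm htz]
          rw [XTheta_neg Θ t _ _ _
            ⟨by rw [neg_neg]; exact sos x y (-z) (z ^ 2 - 4 * t) hw hB.le hPm.1,
             neg_lt_zero.2 (Real.sqrt_pos.2 hB)⟩]
          rw [neg_neg, neg_sq, Real.sq_sqrt hB.le,
            show z ^ 2 - 4 * t + 4 * t = z ^ 2 from by ring,
            q4 _ hB.le, sq4' z hz.le, sqrt_sq' z hz.le, neg_neg]
          exact Prod.ext (key x (-z) _ hw hB) (Prod.ext (key y (-z) _ hw hB) rfl)
        · have hB : (0:ℝ) < 4 * t - z ^ 2 := by push_neg at htz; linarith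
          have hrB : (4 * t - z ^ 2) ^ ((1:ℝ)/4) ≠ 0 := ne_of_gt (Real.rpow_pos_of_pos hB _)
          have hsos : (x * Real.cos Θ + y * Real.sin Θ) ^ 2
              + (-x * Real.sin Θ + y * Real.cos Θ) ^ 2 ≤ -z := by
            have : (x * Real.cos Θ + y * Real.sin Θ) ^ 2
                + (-x * Real.sin Θ + y * Real.cos Θ) ^ 2 = x ^ 2 + y ^ 2 := by
              linear_combination (x ^ 2 + y ^ 2) * hsint
            rw [this]; exact hPm.1
          rw [YTheta_neg_late Θ t x y z hPm htz]
          rw [XTheta_pos_late Θ t _ _ _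
            ⟨sos _ _ (-z) (4 * t - z ^ 2) hw hB.le hsos, Real.sqrt_pos.2 hB⟩
            (by rw [Real.sq_sqrt hB.le]; intro h; nlinarith)]
          rw [Real.sq_sqrt hB.le,
            show 4 * t - (4 * t - z ^ 2) = z ^ 2 from by ring,
            q4 _ hB.le, sq4' z hz.le, sqrt_sq' z hz.le, neg_neg]
          refine Prod.ext ?_ (Prod.ext ?_ rfl)
          · have hn : (x * Real.cos Θ + y * Real.sin Θ) / Real.sqrt (-z)
                  * (4 * t - z ^ 2) ^ ((1:ℝ)/4) * Real.cos Θ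
                - (-x * Real.sin Θ + y * Real.cos Θ) / Real.sqrt (-z)
                  * (4 * t - z ^ 2) ^ ((1:ℝ)/4) * Real.sin Θ
                = x / Real.sqrt (-z) * (4 * t - z ^ 2) ^ ((1:ℝ)/4) := by
              linear_combination x * (4 * t - z ^ 2) ^ ((1:ℝ)/4) / Real.sqrt (-z) * hsint
            rw [hn]; exact key x (-z) _ hw hB
          · have hn : (x * Real.cos Θ + y * Real.sin Θ) / Real.sqrt (-z)
                  * (4 * t - z ^ 2) ^ ((1:ℝ)/4) * Real.sin Θ
                + (-x * Real.sin Θ + y * Real.cos Θ) / Real.sqrt (-z)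
                  * (4 * t - z ^ 2) ^ ((1:ℝ)/4) * Real.cos Θ
                = y / Real.sqrt (-z) * (4 * t - z ^ 2) ^ ((1:ℝ)/4) := by
              linear_combination y * (4 * t - z ^ 2) ^ ((1:ℝ)/4) / Real.sqrt (-z) * hsint
            rw [hn]; exact key y (-z) _ hw hB
      · -- Y ∘ X
        have hA : (0:ℝ) < z ^ 2 + 4 * t := by nlinarith
        rw [XTheta_neg Θ t x y z hPm]
        rw [YTheta_neg_early Θ t _ _ _
          ⟨by rw [neg_neg]; exact sos x y (-z) (z ^ 2 + 4 * t) hw hA.le hPm.1,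
           neg_lt_zero.2 (Real.sqrt_pos.2 hA)⟩
          (by rw [neg_sq, Real.sq_sqrt hA.le]; nlinarith [sq_nonneg z])]
        rw [neg_neg, neg_sq, Real.sq_sqrt hA.le,
          show z ^ 2 + 4 * t - 4 * t = z ^ 2 from by ring,
          q4 _ hA.le, sq4' z hz.le, sqrt_sq' z hz.le, neg_neg]
        exact Prod.ext (key x (-z) _ hw hA) (Prod.ext (key y (-z) _ hw hA) rfl)
    · -- outside P
      rw [YTheta_id Θ t x y z hPp hPm, XTheta_id Θ t x y z hPm hPp,
        YTheta_id Θ t x y z hPp hPm]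
      exact ⟨rfl, rfl⟩

end
end

section
/- Let β, ε > 0, t₁ ≥ 0, α = 4β/3, and let A(t) = −(27/16)·(X₃(t) − βε)/(β³ε³), where X₃(t) = 4βε / (2 + exp( (27/(8β²ε²))·(t − t₁) )). Then for any c ≥ 0, the function φ(t) = c · exp( −(27/(8β²ε²))·(t − t₁) ) · ( (2 + exp( (27/(8β²ε²))·(t − t₁) ))/3 )² satisfies φ'(t) = 2A(t)·φ(t) for all t ≥ t₁, with φ(t₁) = c. Consequently, along trajectories of the approximating vector field in the transition zone, the squared distance from the z-axis, φ = X₁² + X₂², evolves according to this explicit formula with c = ((x²+y²)/z)·αε. -/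
open Real

noncomputable section

lemma exp_deriv_aux (k t₁ t : ℝ) :
    HasDerivAt (fun t : ℝ => Real.exp (k * (t - t₁))) (k * Real.exp (k * (t - t₁))) t := by
  have h : HasDerivAt (fun t : ℝ => k * (t - t₁)) k t := by
    simpa using (((hasDerivAt_id t).sub_const t₁).const_mul k)
  simpa [mul_comm] using h.exp

lemma phi_deriv (k t₁ c t : ℝ) :
    HasDerivAt (fun t : ℝ => c * Real.exp (-k * (t - t₁)) *
      ((2 + Real.exp (k * (t - t₁))) / 3) ^ 2)
      (k * (Real.exp (k * (t - t₁)) - 2) / (2 + Real.exp (k * (t - t₁))) *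
        (c * Real.exp (-k * (t - t₁)) * ((2 + Real.exp (k * (t - t₁))) / 3) ^ 2)) t := by
  have h1 := (exp_deriv_aux (-k) t₁ t).const_mul c
  have h2 : HasDerivAt (fun t : ℝ => ((2 + Real.exp (k * (t - t₁))) / 3) ^ 2)
      (2 * ((2 + Real.exp (k * (t - t₁))) / 3) * (k * Real.exp (k * (t - t₁)) / 3)) t := by
    have := (((exp_deriv_aux k t₁ t).const_add 2).div_const 3).fun_pow 2
    simpa [mul_comm, mul_assoc, mul_left_comm] using this
  have h := h1.fun_mul h2
  have hpos : (0:ℝ) < 2 + Real.exp (k * (t - t₁)) := by positivity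
  have hne : (2 + Real.exp (k * (t - t₁))) ≠ 0 := ne_of_gt hpos
  refine h.congr_deriv ?_
  have hexp : Real.exp (-k * (t - t₁)) = (Real.exp (k * (t - t₁)))⁻¹ := by
    rw [← Real.exp_neg]; ring_nf
  rw [hexp]
  have he : Real.exp (k * (t - t₁)) ≠ 0 := (Real.exp_pos _).ne'
  field_simp
  ring

lemma nu_deriv (k t₁ t : ℝ) :
    HasDerivAt (fun t : ℝ => Real.exp (k * (t - t₁)) *
      (3 / (2 + Real.exp (k * (t - t₁)))) ^ 2)
      (-(k * (Real.exp (k * (t - t₁)) - 2) / (2 + Real.exp (k * (t - t₁)))) *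
        (Real.exp (k * (t - t₁)) * (3 / (2 + Real.exp (k * (t - t₁)))) ^ 2)) t := by
  have hpos : ∀ s : ℝ, (0:ℝ) < 2 + Real.exp (k * (s - t₁)) := fun s => by positivity
  have h2 : HasDerivAt (fun t : ℝ => (3 / (2 + Real.exp (k * (t - t₁)))) ^ 2)
      (2 * (3 / (2 + Real.exp (k * (t - t₁)))) *
        (-(3 * (k * Real.exp (k * (t - t₁)))) / (2 + Real.exp (k * (t - t₁))) ^ 2)) t := by
    have hd : HasDerivAt (fun t : ℝ => 3 / (2 + Real.exp (k * (t - t₁))))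
        ((0 * (2 + Real.exp (k * (t - t₁))) - 3 * (k * Real.exp (k * (t - t₁)))) /
          (2 + Real.exp (k * (t - t₁))) ^ 2) t :=
      (hasDerivAt_const t (3:ℝ)).div ((exp_deriv_aux k t₁ t).const_add 2) (hpos t).ne'
    simpa [mul_comm, mul_assoc, mul_left_comm] using hd.fun_pow 2
  have h := (exp_deriv_aux k t₁ t).fun_mul h2
  refine h.congr_deriv ?_
  have hne := (hpos t).ne'
  field_simp
  ring

/-- In the upper transition zone of the construction, with
`X₃(t) = 4βε / (2 + exp((27/(8β²ε²))(t − t₁)))` and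
`A(t) = −(27/16)(X₃(t) − βε)/(β³ε³)`, for any `c ≥ 0` the function
`φ(t) = c · exp(−(27/(8β²ε²))(t − t₁)) · ((2 + exp((27/(8β²ε²))(t − t₁)))/3)²`
satisfies `φ' = 2Aφ` for `t ≥ t₁` and `φ(t₁) = c`. Consequently, if `(X₁, X₂)` solves the
linear system `Ẋ₁ = A X₁ − B X₂`, `Ẋ₂ = B X₁ + A X₂` (for any coefficient `B`) with
`X₁(t₁)² + X₂(t₁)² = c`, then the squared distance from the `z`-axis evolves exactly as
`X₁(t)² + X₂(t)² = φ(t)` for `t ≥ t₁`; along the trajectories of the approximating vector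
field one takes `c = ((x²+y²)/z)·αε` with `α = 4β/3`. -/
theorem transition_zone_squared_radius (β ε t₁ : ℝ) (hβ : 0 < β) (hε : 0 < ε)
    (ht₁ : 0 ≤ t₁) (c : ℝ) (hc : 0 ≤ c) :
    let X₃ : ℝ → ℝ := fun t =>
      4 * β * ε / (2 + Real.exp (27 / (8 * β ^ 2 * ε ^ 2) * (t - t₁)))
    let A : ℝ → ℝ := fun t => -(27 / 16) * (X₃ t - β * ε) / (β ^ 3 * ε ^ 3)
    let φ : ℝ → ℝ := fun t =>
      c * Real.exp (-(27 / (8 * β ^ 2 * ε ^ 2)) * (t - t₁)) *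
        ((2 + Real.exp (27 / (8 * β ^ 2 * ε ^ 2) * (t - t₁))) / 3) ^ 2
    (∀ t : ℝ, t₁ ≤ t → HasDerivAt φ (2 * A t * φ t) t) ∧
    φ t₁ = c ∧
    (∀ B X₁ X₂ : ℝ → ℝ,
      (∀ t : ℝ, t₁ ≤ t → HasDerivAt X₁ (A t * X₁ t - B t * X₂ t) t) →
      (∀ t : ℝ, t₁ ≤ t → HasDerivAt X₂ (B t * X₁ t + A t * X₂ t) t) →
      X₁ t₁ ^ 2 + X₂ t₁ ^ 2 = c →
      ∀ t : ℝ, t₁ ≤ t → X₁ t ^ 2 + X₂ t ^ 2 = φ t) := by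
  intro X₃ A φ
  set k : ℝ := 27 / (8 * β ^ 2 * ε ^ 2) with hk
  have hβε : β * ε ≠ 0 := by positivity
  have hpos : ∀ s : ℝ, (0:ℝ) < 2 + Real.exp (k * (s - t₁)) := fun s => by positivity
  -- key: 2 * A t = k * (e - 2)/(2 + e)
  have hA : ∀ t : ℝ, 2 * A t =
      k * (Real.exp (k * (t - t₁)) - 2) / (2 + Real.exp (k * (t - t₁))) := by
    intro t
    show 2 * (-(27 / 16) * (4 * β * ε / (2 + Real.exp (k * (t - t₁))) - β * ε) /
        (β ^ 3 * ε ^ 3)) = _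
    have hne := (hpos t).ne'
    rw [hk]
    field_simp
    ring
  have hφd : ∀ t : ℝ, HasDerivAt φ (2 * A t * φ t) t := by
    intro t
    have := phi_deriv k t₁ c t
    rw [← hA t] at this
    simpa [φ, hk, neg_mul] using this
  refine ⟨fun t _ => hφd t, ?_, ?_⟩
  · show c * Real.exp (-(k) * (t₁ - t₁)) * ((2 + Real.exp (k * (t₁ - t₁))) / 3) ^ 2 = c
    simp
    norm_num
  · intro B X₁ X₂ h1 h2 hinit t ht
    set ν : ℝ → ℝ := fun t => Real.exp (k * (t - t₁)) *
      (3 / (2 + Real.exp (k * (t - t₁)))) ^ 2 with hν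
    have hν0 : ∀ s, ν s ≠ 0 := by
      intro s
      have := (hpos s).ne'
      positivity
    have hg : ∀ s : ℝ, t₁ ≤ s →
        HasDerivAt (fun u => (X₁ u ^ 2 + X₂ u ^ 2) * ν u) 0 s := by
      intro s hs
      have hX : HasDerivAt (fun u => X₁ u ^ 2 + X₂ u ^ 2)
          (2 * A s * (X₁ s ^ 2 + X₂ s ^ 2)) s := by
        have := (((h1 s hs).fun_pow 2).add ((h2 s hs).fun_pow 2))
        refine this.congr_deriv ?_
        ring
      have hνd := nu_deriv k t₁ s
      rw [← hA s] at hνd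
      have := hX.fun_mul hνd
      refine this.congr_deriv ?_
      show _ = (0:ℝ)
      ring
    have hcont : ContinuousOn (fun u => (X₁ u ^ 2 + X₂ u ^ 2) * ν u) (Set.Icc t₁ t) := by
      intro s hs
      exact ((hg s hs.1).continuousAt).continuousWithinAt
    have hconst := constant_of_has_deriv_right_zero hcont
      (fun s hs => ((hg s hs.1).hasDerivWithinAt)) t (Set.right_mem_Icc.2 ht)
    have hν1 : ν t₁ = 1 := by simp [hν]; norm_num
    rw [hinit, hν1, mul_one] at hconst
    -- now (X₁ t ^2 + X₂ t^2) * ν t = c, and φ t * ν t = c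
    have hφν : φ t * ν t = c := by
      show (c * Real.exp (-(k) * (t - t₁)) * ((2 + Real.exp (k * (t - t₁))) / 3) ^ 2) * ν t = c
      rw [hν]
      have hne := (hpos t).ne'
      rw [show Real.exp (-k * (t - t₁)) = (Real.exp (k * (t - t₁)))⁻¹ by
        rw [← Real.exp_neg]; ring_nf]
      have he : Real.exp (k * (t - t₁)) ≠ 0 := (Real.exp_pos _).ne'
      field_simp
    have := mul_right_cancel₀ (hν0 t) (hconst.trans hφν.symm)
    exact this

end
end
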